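/- arXiv:1508.01014 — 9 statements merged into one kernel-verified Lean document; each statement's English description precedes it below -/
import Mathlib

section
/- The only connected graph G with λ'(G) = 2 is the path P₃ on three vertices. -/
open SimpleGraph

/-- Two edges (as unordered pairs) are adjacent: distinct and share an endpoint. -/
def edgeAdj {V : Type*} (e e' : Sym2 V) : Prop := e ≠ e' ∧ ∃ v, v ∈ e ∧ v ∈ e'

/-- Two edges are at distance two: not adjacent, distinct, and some edge of `G` is
adjacent to both. -/
def edgeDist2 {V : Type*} (G : SimpleGraph V) (e e' : Sym2 V) : Prop :=
  ¬ edgeAdj e e' ∧ e ≠ e' ∧ ∃ g ∈ G.edgeSet, edgeAdj e g ∧ edgeAdj g e'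

/-- A distance edge-labeling: adjacent edges get labels differing by ≥ 2,
edges at distance two get labels differing by ≥ 1. -/
def IsDistEdgeLabeling {V : Type*} (G : SimpleGraph V) (f : Sym2 V → ℕ) : Prop :=
  (∀ e ∈ G.edgeSet, ∀ e' ∈ G.edgeSet, edgeAdj e e' → 2 ≤ |(f e : ℤ) - (f e' : ℤ)|) ∧
  (∀ e ∈ G.edgeSet, ∀ e' ∈ G.edgeSet, edgeDist2 G e e' → 1 ≤ |(f e : ℤ) - (f e' : ℤ)|)

/-- `lambdaE G = λ'(G)`: the minimum over distance edge-labelings of the maximum label. -/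
noncomputable def lambdaE {V : Type*} (G : SimpleGraph V) : ℕ :=
  sInf {l | ∃ f : Sym2 V → ℕ, IsDistEdgeLabeling G f ∧ ∀ e ∈ G.edgeSet, f e ≤ l}

/-- A walk from inside `S` to outside `S` crosses the boundary. -/
lemma boundary_of_walk {V : Type*} {G : SimpleGraph V} (S : Set V) :
    ∀ {x y : V}, G.Walk x y → x ∈ S → y ∉ S →
      ∃ u w, G.Adj u w ∧ u ∈ S ∧ w ∉ S := by
  intro x y p
  induction p with
  | nil => intro hx hy; exact absurd hx hy
  | @cons x' b' y' h q ih =>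
    intro hx hy
    by_cases hb : b' ∈ S
    · exact ih hb hy
    · exact ⟨x', b', h, hx, hb⟩

/-- Three pairwise adjacent edges cannot all receive labels ≤ 2. -/
lemma three_edges_false {V : Type*} {G : SimpleGraph V} {f : Sym2 V → ℕ}
    (hf : IsDistEdgeLabeling G f) (hb : ∀ e ∈ G.edgeSet, f e ≤ 2)
    {e1 e2 e3 : Sym2 V} (h1 : e1 ∈ G.edgeSet) (h2 : e2 ∈ G.edgeSet) (h3 : e3 ∈ G.edgeSet)
    (a12 : edgeAdj e1 e2) (a23 : edgeAdj e2 e3) (a13 : edgeAdj e1 e3) : False := by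
  have c12 := hf.1 e1 h1 e2 h2 a12
  have c23 := hf.1 e2 h2 e3 h3 a23
  have c13 := hf.1 e1 h1 e3 h3 a13
  have b1 := hb e1 h1; have b2 := hb e2 h2; have b3 := hb e3 h3
  rcases le_abs.mp c12 with h|h <;> rcases le_abs.mp c23 with h'|h' <;>
    rcases le_abs.mp c13 with h''|h'' <;> omega

/-- A path configuration e1-e2-e3 with e1,e3 at distance two cannot be labeled within ≤ 2. -/
lemma path_edges_false {V : Type*} {G : SimpleGraph V} {f : Sym2 V → ℕ}
    (hf : IsDistEdgeLabeling G f) (hb : ∀ e ∈ G.edgeSet, f e ≤ 2)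
    {e1 e2 e3 : Sym2 V} (h1 : e1 ∈ G.edgeSet) (h2 : e2 ∈ G.edgeSet) (h3 : e3 ∈ G.edgeSet)
    (a12 : edgeAdj e1 e2) (a23 : edgeAdj e2 e3) (d13 : edgeDist2 G e1 e3) : False := by
  have c12 := hf.1 e1 h1 e2 h2 a12
  have c23 := hf.1 e2 h2 e3 h3 a23
  have c13 := hf.2 e1 h1 e3 h3 d13
  have b1 := hb e1 h1; have b2 := hb e2 h2; have b3 := hb e3 h3
  rcases le_abs.mp c12 with h|h <;> rcases le_abs.mp c23 with h'|h' <;>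
    rcases le_abs.mp c13 with h''|h'' <;> omega

/-- From a pair of adjacent edges extract a cherry (path on 3 vertices). -/
lemma edgeAdj_exists {V : Type*} {G : SimpleGraph V} {e e' : Sym2 V}
    (he : e ∈ G.edgeSet) (he' : e' ∈ G.edgeSet) (h : edgeAdj e e') :
    ∃ a b c : V, G.Adj b a ∧ G.Adj b c ∧ a ≠ c := by
  induction e using Sym2.ind with | _ x y =>
  induction e' using Sym2.ind with | _ u v =>
  obtain ⟨hne, w, hw, hw'⟩ := h
  rw [Sym2.mem_iff] at hw hw'
  rw [SimpleGraph.mem_edgeSet] at he he'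
  rcases hw with rfl | rfl
  · -- e = s(w, y), he : G.Adj w y
    rcases hw' with rfl | rfl
    · exact ⟨y, w, v, he, he', fun hyv => hne (by rw [hyv])⟩
    · refine ⟨y, w, u, he, he'.symm, fun hyu => hne ?_⟩
      rw [hyu]; exact Sym2.eq_swap
  · -- e = s(x, w), he : G.Adj x w
    rcases hw' with rfl | rfl
    · refine ⟨x, w, v, he.symm, he', fun hxv => hne ?_⟩
      rw [hxv]; exact Sym2.eq_swap
    · refine ⟨x, w, u, he.symm, he'.symm, fun hxu => hne ?_⟩
      rw [hxu]
  

lemma pg3_iff : ∀ i j : Fin 3, (pathGraph 3).Adj i j ↔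
    ((i = 0 ∧ j = 1) ∨ (i = 1 ∧ j = 0) ∨ (i = 1 ∧ j = 2) ∨ (i = 2 ∧ j = 1)) := by
  intro i j
  rw [pathGraph_adj]
  fin_cases i <;> fin_cases j <;> decide

theorem stmt4 {V : Type*} [Fintype V] (G : SimpleGraph V) (hc : G.Connected) :
    lambdaE G = 2 ↔ Nonempty (G ≃g SimpleGraph.pathGraph 3) := by
  classical
  set S := {l | ∃ f : Sym2 V → ℕ, IsDistEdgeLabeling G f ∧ ∀ e ∈ G.edgeSet, f e ≤ l} with hSdef
  have hlam : lambdaE G = sInf S := rfl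
  constructor
  · intro h
    rw [hlam] at h
    have hne : S.Nonempty := by
      by_contra hempty
      rw [Set.not_nonempty_iff_eq_empty] at hempty
      rw [hempty, Nat.sInf_empty] at h
      omega
    have h2S : 2 ∈ S := h ▸ Nat.sInf_mem hne
    obtain ⟨f, hf, hfb⟩ := h2S
    -- there exist adjacent edges
    have hadj : ∃ e ∈ G.edgeSet, ∃ e' ∈ G.edgeSet, edgeAdj e e' := by
      by_contra hno
      push_neg at hno
      have h0 : 0 ∈ S := by
        refine ⟨fun _ => 0, ⟨fun e he e' he' hA => absurd hA (hno e he e' he'), ?_⟩,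
          fun e _ => le_refl 0⟩
        intro e he e' he' hd
        obtain ⟨g, hg, hag, _⟩ := hd.2.2
        exact absurd hag (hno e he g hg)
      have := Nat.sInf_le h0
      omega
    obtain ⟨e, he, e', he', hA⟩ := hadj
    obtain ⟨a, b, c, hba, hbc, hac⟩ := edgeAdj_exists he he' hA
    have hba' : b ≠ a := G.ne_of_adj hba
    have hab : a ≠ b := hba'.symm
    have hbc' : b ≠ c := G.ne_of_adj hbc
    have hcb : c ≠ b := hbc'.symm
    have hca : c ≠ a := hac.symm
    have mba : s(b,a) ∈ G.edgeSet := G.mem_edgeSet.mpr hba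
    have mbc : s(b,c) ∈ G.edgeSet := G.mem_edgeSet.mpr hbc
    have aba_bc : edgeAdj s(b,a) s(b,c) :=
      ⟨by rw [ne_eq, Sym2.eq_iff]; tauto, b, by simp, by simp⟩
    -- no edge a-c
    have noac : ¬ G.Adj a c := by
      intro hadjac
      have mac : s(a,c) ∈ G.edgeSet := G.mem_edgeSet.mpr hadjac
      exact three_edges_false hf hfb mba mbc mac aba_bc
        ⟨by rw [ne_eq, Sym2.eq_iff]; tauto, c, by simp, by simp⟩
        ⟨by rw [ne_eq, Sym2.eq_iff]; tauto, a, by simp, by simp⟩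
    -- all vertices are a, b or c
    have hall : ∀ v : V, v = a ∨ v = b ∨ v = c := by
      by_contra hnv
      push_neg at hnv
      obtain ⟨d, hda2, hdb2, hdc2⟩ := hnv
      obtain ⟨u, w, huw, huS, hwS⟩ :=
        boundary_of_walk ({a, b, c} : Set V) (hc.preconnected b d).some (by simp)
          (by simp [hda2, hdb2, hdc2])
      have hwa : w ≠ a := fun h => hwS (by simp [h])
      have haw : a ≠ w := hwa.symm
      have hwb : w ≠ b := fun h => hwS (by simp [h])
      have hbw : b ≠ w := hwb.symm
      have hwc : w ≠ c := fun h => hwS (by simp [h])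
      have hcw : c ≠ w := hwc.symm
      have muw : s(u,w) ∈ G.edgeSet := G.mem_edgeSet.mpr huw
      simp only [Set.mem_insert_iff, Set.mem_singleton_iff] at huS
      rcases huS with rfl | rfl | rfl
      · -- u = a : path w-a-b-c
        have a1 : edgeAdj s(u,w) s(b,u) :=
          ⟨by rw [ne_eq, Sym2.eq_iff]; tauto, u, by simp, by simp⟩
        refine path_edges_false hf hfb muw mba mbc a1 aba_bc
          ⟨?_, by rw [ne_eq, Sym2.eq_iff]; tauto, s(b,u), mba, a1, aba_bc⟩
        rintro ⟨-, v, hv, hv'⟩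
        rw [Sym2.mem_iff] at hv hv'
        rcases hv with rfl | rfl <;> rcases hv' with rfl | rfl <;> simp_all
      · -- u = b : three edges at b
        exact three_edges_false hf hfb mba mbc muw aba_bc
          ⟨by rw [ne_eq, Sym2.eq_iff]; tauto, u, by simp, by simp⟩
          ⟨by rw [ne_eq, Sym2.eq_iff]; tauto, u, by simp, by simp⟩
      · -- u = c : path a-b-c-w
        have a2 : edgeAdj s(b,u) s(u,w) :=
          ⟨by rw [ne_eq, Sym2.eq_iff]; tauto, u, by simp, by simp⟩
        refine path_edges_false hf hfb mba mbc muw aba_bc a2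
          ⟨?_, by rw [ne_eq, Sym2.eq_iff]; tauto, s(b,u), mbc, aba_bc, a2⟩
        rintro ⟨-, v, hv, hv'⟩
        rw [Sym2.mem_iff] at hv hv'
        rcases hv with rfl | rfl <;> rcases hv' with rfl | rfl <;> simp_all
    -- adjacency characterization
    have hGAdj : ∀ u v : V, G.Adj u v ↔
        ((u = a ∧ v = b) ∨ (u = b ∧ v = a) ∨ (u = b ∧ v = c) ∨ (u = c ∧ v = b)) := by
      intro u v
      constructor
      · intro hu
        rcases hall u with rfl | rfl | rfl <;> rcases hall v with rfl | rfl | rfl <;>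
          first
            | exact (G.irrefl hu).elim
            | exact (noac hu).elim
            | exact (noac hu.symm).elim
            | tauto
      · rintro (⟨rfl, rfl⟩ | ⟨rfl, rfl⟩ | ⟨rfl, rfl⟩ | ⟨rfl, rfl⟩)
        exacts [hba.symm, hba, hbc, hbc.symm]
    refine ⟨⟨⟨fun v => if v = a then 0 else if v = b then 1 else 2,
      fun i => if i = 0 then a else if i = 1 then b else c, ?_, ?_⟩, ?_⟩⟩
    · intro v
      rcases hall v with rfl | rfl | rfl <;> simp [hba', hca, hcb]
    · intro i
      fin_cases i <;> simp [hba', hca, hcb]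
    · intro u v
      simp only [Equiv.coe_fn_mk]
      rcases hall u with rfl | rfl | rfl <;> rcases hall v with rfl | rfl | rfl <;>
        rw [pg3_iff, hGAdj] <;>
        simp [hab, hba', hbc', hcb, hac, hca]
  · rintro ⟨φ⟩
    set a := φ.symm 0 with ha
    set b := φ.symm 1 with hb
    set c := φ.symm 2 with hcdef
    have hab : a ≠ b := fun h => absurd (φ.symm.injective h) (by decide)
    have hbc' : b ≠ c := fun h => absurd (φ.symm.injective h) (by decide)
    have hac : a ≠ c := fun h => absurd (φ.symm.injective h) (by decide)
    have hadjAB : G.Adj a b := by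
      have : (pathGraph 3).Adj (φ a) (φ b) := by
        rw [ha, hb, φ.apply_symm_apply, φ.apply_symm_apply]
        exact pathGraph_adj.mpr (Or.inl rfl)
      exact φ.map_adj_iff.mp this
    have hadjBC : G.Adj b c := by
      have : (pathGraph 3).Adj (φ b) (φ c) := by
        rw [hb, hcdef, φ.apply_symm_apply, φ.apply_symm_apply]
        exact pathGraph_adj.mpr (Or.inl rfl)
      exact φ.map_adj_iff.mp this
    have mab : s(a,b) ∈ G.edgeSet := G.mem_edgeSet.mpr hadjAB
    have mbc : s(b,c) ∈ G.edgeSet := G.mem_edgeSet.mpr hadjBC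
    have hedge : ∀ e ∈ G.edgeSet, e = s(a,b) ∨ e = s(b,c) := by
      intro e he
      induction e using Sym2.ind with | _ x y =>
      rw [SimpleGraph.mem_edgeSet] at he
      have hpg : (pathGraph 3).Adj (φ x) (φ y) := φ.map_adj_iff.mpr he
      have hx := φ.symm_apply_apply x
      have hy := φ.symm_apply_apply y
      rcases (pg3_iff (φ x) (φ y)).mp hpg with ⟨h1, h2⟩ | ⟨h1, h2⟩ | ⟨h1, h2⟩ | ⟨h1, h2⟩
      · left; rw [h1] at hx; rw [h2] at hy; rw [← hx, ← hy, ha, hb]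
      · left; rw [h1] at hx; rw [h2] at hy; rw [← hx, ← hy, ha, hb]; exact Sym2.eq_swap
      · right; rw [h1] at hx; rw [h2] at hy; rw [← hx, ← hy, hb, hcdef]
      · right; rw [h1] at hx; rw [h2] at hy; rw [← hx, ← hy, hb, hcdef]; exact Sym2.eq_swap
    have aab_bc : edgeAdj s(a,b) s(b,c) :=
      ⟨by rw [ne_eq, Sym2.eq_iff]; tauto, b, by simp, by simp⟩
    have h2S : 2 ∈ S := by
      refine ⟨fun e => if e = s(a,b) then 0 else 2, ⟨?_, ?_⟩, ?_⟩
      · intro e he e' he' hA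
        rcases hedge e he with rfl | rfl <;> rcases hedge e' he' with rfl | rfl
        · exact absurd rfl hA.1
        · norm_num [aab_bc.1.symm]
        · norm_num [aab_bc.1.symm]
        · exact absurd rfl hA.1
      · intro e he e' he' hd
        rcases hedge e he with rfl | rfl <;> rcases hedge e' he' with rfl | rfl
        · exact absurd rfl hd.2.1
        · exact absurd aab_bc hd.1
        · exact absurd ⟨aab_bc.1.symm, b, by simp, by simp⟩ hd.1
        · exact absurd rfl hd.2.1
      · intro e _
        dsimp only
        split <;> omega
    have hlow : ∀ l ∈ S, 2 ≤ l := by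
      rintro l ⟨f, ⟨hf1, -⟩, hfb⟩
      have c12 := hf1 _ mab _ mbc aab_bc
      have b1 := hfb _ mab
      have b2 := hfb _ mbc
      rcases le_abs.mp c12 with h | h <;> omega
    rw [hlam]
    exact le_antisymm (Nat.sInf_le h2S) (hlow _ (Nat.sInf_mem ⟨2, h2S⟩))
end

section
/- The connected graphs G with λ'(G) = 3 are exactly the paths P₄ and P₅. -/
open SimpleGraph

/-! ### Decidability instances -/

instance {V : Type*} [DecidableEq V] [Fintype V] (e e' : Sym2 V) : Decidable (edgeAdj e e') := by
  unfold edgeAdj; infer_instance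

instance {V : Type*} [DecidableEq V] [Fintype V] (G : SimpleGraph V) [DecidableRel G.Adj]
    (e e' : Sym2 V) : Decidable (edgeDist2 G e e') := by
  unfold edgeDist2; infer_instance

instance {V : Type*} [DecidableEq V] [Fintype V] (G : SimpleGraph V) [DecidableRel G.Adj]
    (f : Sym2 V → ℕ) : Decidable (IsDistEdgeLabeling G f) := by
  unfold IsDistEdgeLabeling; infer_instance

instance (n : ℕ) : DecidableRel (pathGraph n).Adj := fun _ _ =>
  decidable_of_iff _ pathGraph_adj.symm

/-! ### Arithmetic helpers -/

lemma abs2' (a b : ℕ) : 2 ≤ |(a:ℤ)-(b:ℤ)| ↔ a+2 ≤ b ∨ b+2 ≤ a := by rw [le_abs]; omega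
lemma abs1' (a b : ℕ) : 1 ≤ |(a:ℤ)-(b:ℤ)| ↔ a ≠ b := by rw [le_abs]; omega

/-! ### Edge adjacency helpers -/

lemma sym2_ne {V : Type*} {a b c d : V} (h : ¬((a=c∧b=d)∨(a=d∧b=c))) : s(a,b) ≠ s(c,d) := by
  rw [Ne, Sym2.eq_iff]; exact h

lemma not_edgeAdj {V : Type*} {a b c d : V} (h1 : a ≠ c) (h2 : a ≠ d) (h3 : b ≠ c)
    (h4 : b ≠ d) : ¬ edgeAdj s(a,b) s(c,d) := by
  rintro ⟨-, v, hv1, hv2⟩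
  rw [Sym2.mem_iff] at hv1 hv2
  rcases hv1 with rfl|rfl <;> rcases hv2 with rfl|rfl <;> simp_all

lemma edgeAdj_cons {V : Type*} {a b c : V} (hab : a ≠ b) (hac : a ≠ c) :
    edgeAdj s(a,b) s(b,c) :=
  ⟨sym2_ne (by tauto), b, by simp, by simp⟩

lemma edgeDist2_path {V : Type*} {G : SimpleGraph V} {a b c d : V}
    (hbc : G.Adj b c) (hac : a ≠ c) (had : a ≠ d) (hbd : b ≠ d) :
    edgeDist2 G s(a,b) s(c,d) := by
  have hbcne := hbc.ne
  refine ⟨not_edgeAdj hac had hbcne hbd, sym2_ne (by tauto), s(b,c),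
    G.mem_edgeSet.2 hbc, ⟨sym2_ne (by tauto), b, by simp, by simp⟩,
    ⟨sym2_ne (by tauto), c, by simp, by simp⟩⟩

/-! ### HasLab -/

def HasLab {V : Type*} (G : SimpleGraph V) (k : ℕ) : Prop :=
  ∃ f : Sym2 V → ℕ, IsDistEdgeLabeling G f ∧ ∀ e ∈ G.edgeSet, f e ≤ k

lemma lambdaE_def' {V : Type*} (G : SimpleGraph V) : lambdaE G = sInf {l | HasLab G l} := rfl

lemma HasLab.mono {V : Type*} {G : SimpleGraph V} {k l : ℕ} (h : HasLab G k) (hkl : k ≤ l) :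
    HasLab G l := by
  obtain ⟨f, hf, hb⟩ := h
  exact ⟨f, hf, fun e he => (hb e he).trans hkl⟩

lemma hasLab_exists {V : Type*} [Fintype V] (G : SimpleGraph V) :
    HasLab G (4 * Fintype.card (Sym2 V)) := by
  classical
  refine ⟨fun x => 4 * (Fintype.equivFin (Sym2 V) x : ℕ), ⟨?_, ?_⟩, ?_⟩
  · intro e _ e' _ hadj
    dsimp only
    rw [abs2']
    have : e ≠ e' := hadj.1
    have hne : (Fintype.equivFin (Sym2 V) e : ℕ) ≠ (Fintype.equivFin (Sym2 V) e' : ℕ) := by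
      simp only [Ne, Fin.val_eq_val, EmbeddingLike.apply_eq_iff_eq]; exact this
    omega
  · intro e _ e' _ hd
    dsimp only
    rw [abs1']
    have : e ≠ e' := hd.2.1
    have hne : (Fintype.equivFin (Sym2 V) e : ℕ) ≠ (Fintype.equivFin (Sym2 V) e' : ℕ) := by
      simp only [Ne, Fin.val_eq_val, EmbeddingLike.apply_eq_iff_eq]; exact this
    omega
  · intro e _
    dsimp only
    have := (Fintype.equivFin (Sym2 V) e).isLt
    omega

lemma lambdaE_eq_three_iff {V : Type*} [Fintype V] (G : SimpleGraph V) :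
    lambdaE G = 3 ↔ HasLab G 3 ∧ ¬ HasLab G 2 := by
  have hne : {l | HasLab G l}.Nonempty := ⟨_, hasLab_exists G⟩
  rw [lambdaE_def']
  constructor
  · intro h
    constructor
    · have h3 := Nat.sInf_mem hne
      rw [h] at h3
      exact h3
    · intro h2
      have hle : sInf {l | HasLab G l} ≤ 2 := Nat.sInf_le h2
      omega
  · rintro ⟨h3, h2⟩
    refine le_antisymm (Nat.sInf_le h3) ?_
    by_contra hlt
    push_neg at hlt
    have hmem := Nat.sInf_mem hne
    exact h2 ((hmem : HasLab G _).mono (by omega))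

/-! ### Transfer along isomorphisms -/

lemma edgeAdj_map_iff {V W : Type*} (φ : V ≃ W) (e e' : Sym2 V) :
    edgeAdj (e.map φ) (e'.map φ) ↔ edgeAdj e e' := by
  unfold edgeAdj
  constructor
  · rintro ⟨hne, w, hw1, hw2⟩
    refine ⟨fun h => hne (by rw [h]), φ.symm w, ?_, ?_⟩
    · rw [Sym2.mem_map] at hw1; obtain ⟨a, ha, rfl⟩ := hw1; simpa using ha
    · rw [Sym2.mem_map] at hw2; obtain ⟨a, ha, rfl⟩ := hw2; simpa using ha
  · rintro ⟨hne, v, hv1, hv2⟩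
    refine ⟨fun h => hne (Sym2.map.injective φ.injective h), φ v, ?_, ?_⟩
    · rw [Sym2.mem_map]; exact ⟨v, hv1, rfl⟩
    · rw [Sym2.mem_map]; exact ⟨v, hv2, rfl⟩

lemma hasLab_of_iso {V W : Type*} {G : SimpleGraph V} {H : SimpleGraph W} (φ : G ≃g H)
    {k : ℕ} (h : HasLab H k) : HasLab G k := by
  obtain ⟨f, ⟨hf1, hf2⟩, hb⟩ := h
  refine ⟨fun e => f (e.map φ), ⟨?_, ?_⟩, ?_⟩
  · intro e he e' he' hadj
    exact hf1 _ (φ.map_mem_edgeSet_iff.2 he) _ (φ.map_mem_edgeSet_iff.2 he')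
      ((edgeAdj_map_iff φ.toEquiv e e').2 hadj)
  · intro e he e' he' hd
    obtain ⟨hna, hne, g, hg, hg1, hg2⟩ := hd
    refine hf2 _ (φ.map_mem_edgeSet_iff.2 he) _ (φ.map_mem_edgeSet_iff.2 he')
      ⟨fun h => hna ((edgeAdj_map_iff φ.toEquiv e e').1 h),
       fun h => hne (Sym2.map.injective φ.injective h),
       g.map φ, φ.map_mem_edgeSet_iff.2 hg,
       (edgeAdj_map_iff φ.toEquiv e g).2 hg1, (edgeAdj_map_iff φ.toEquiv g e').2 hg2⟩
  · intro e he
    exact hb _ (φ.map_mem_edgeSet_iff.2 he)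

/-! ### Forbidden configurations -/

section Forbidden

variable {V : Type*} {G : SimpleGraph V} {f : Sym2 V → ℕ}
  (hf : IsDistEdgeLabeling G f) (hb : ∀ e ∈ G.edgeSet, f e ≤ 3)
include hf hb

lemma no_deg3 {v a b c : V} (hab : a ≠ b) (hac : a ≠ c) (hbc : b ≠ c)
    (h1 : G.Adj v a) (h2 : G.Adj v b) (h3 : G.Adj v c) : False := by
  have m1 := G.mem_edgeSet.2 h1.symm
  have m2 := G.mem_edgeSet.2 h2
  have m3 := G.mem_edgeSet.2 h3
  have A12 := hf.1 _ m1 _ m2 (edgeAdj_cons h1.ne' hab)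
  have A13 := hf.1 _ m1 _ m3 (edgeAdj_cons h1.ne' hac)
  have A23 := hf.1 _ m2 _ m3 ⟨sym2_ne (by have := h2.ne; tauto), v, by simp, by simp⟩
  rw [abs2'] at A12 A13 A23
  have B1 := hb _ m1; have B2 := hb _ m2; have B3 := hb _ m3
  omega

lemma no_C3 {a b c : V} (h1 : G.Adj a b) (h2 : G.Adj b c) (h3 : G.Adj c a) : False := by
  have m1 := G.mem_edgeSet.2 h1
  have m2 := G.mem_edgeSet.2 h2
  have m3 := G.mem_edgeSet.2 h3
  have hab := h1.ne; have hbc := h2.ne; have hca := h3.ne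
  have A12 := hf.1 _ m1 _ m2 (edgeAdj_cons hab (Ne.symm hca))
  have A23 := hf.1 _ m2 _ m3 (edgeAdj_cons hbc (Ne.symm hab))
  have A31 := hf.1 _ m3 _ m1 (edgeAdj_cons hca (Ne.symm hbc))
  rw [abs2'] at A12 A23 A31
  have B1 := hb _ m1; have B2 := hb _ m2; have B3 := hb _ m3
  omega

lemma no_C4 {a b c d : V} (h1 : G.Adj a b) (h2 : G.Adj b c) (h3 : G.Adj c d)
    (h4 : G.Adj d a) (hac : a ≠ c) (hbd : b ≠ d) : False := by
  have m1 := G.mem_edgeSet.2 h1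
  have m2 := G.mem_edgeSet.2 h2
  have m3 := G.mem_edgeSet.2 h3
  have m4 := G.mem_edgeSet.2 h4
  have A12 := hf.1 _ m1 _ m2 (edgeAdj_cons h1.ne hac)
  have A23 := hf.1 _ m2 _ m3 (edgeAdj_cons h2.ne hbd)
  have A34 := hf.1 _ m3 _ m4 (edgeAdj_cons h3.ne hac.symm)
  have A41 := hf.1 _ m4 _ m1 (edgeAdj_cons h4.ne hbd.symm)
  have D13 := hf.2 _ m1 _ m3 (edgeDist2_path h2 hac h4.ne' hbd)
  have D24 := hf.2 _ m2 _ m4 (edgeDist2_path h3 hbd h1.ne' hac.symm)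
  rw [abs2'] at A12 A23 A34 A41
  rw [abs1'] at D13 D24
  have B1 := hb _ m1; have B2 := hb _ m2; have B3 := hb _ m3; have B4 := hb _ m4
  omega

lemma no_C5 {a b c d e : V} (h1 : G.Adj a b) (h2 : G.Adj b c) (h3 : G.Adj c d)
    (h4 : G.Adj d e) (h5 : G.Adj e a) (hac : a ≠ c) (had : a ≠ d) (hbd : b ≠ d)
    (hbe : b ≠ e) (hce : c ≠ e) : False := by
  have m1 := G.mem_edgeSet.2 h1
  have m2 := G.mem_edgeSet.2 h2
  have m3 := G.mem_edgeSet.2 h3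
  have m4 := G.mem_edgeSet.2 h4
  have m5 := G.mem_edgeSet.2 h5
  have A12 := hf.1 _ m1 _ m2 (edgeAdj_cons h1.ne hac)
  have A23 := hf.1 _ m2 _ m3 (edgeAdj_cons h2.ne hbd)
  have A34 := hf.1 _ m3 _ m4 (edgeAdj_cons h3.ne hce)
  have A45 := hf.1 _ m4 _ m5 (edgeAdj_cons h4.ne had.symm)
  have A51 := hf.1 _ m5 _ m1 (edgeAdj_cons h5.ne hbe.symm)
  have D13 := hf.2 _ m1 _ m3 (edgeDist2_path h2 hac had hbd)
  have D24 := hf.2 _ m2 _ m4 (edgeDist2_path h3 hbd hbe hce)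
  have D35 := hf.2 _ m3 _ m5 (edgeDist2_path h4 hce hac.symm had.symm)
  have D41 := hf.2 _ m4 _ m1 (edgeDist2_path h5 had.symm hbd.symm hbe.symm)
  have D52 := hf.2 _ m5 _ m2 (edgeDist2_path h1 hbe.symm hce.symm hac)
  rw [abs2'] at A12 A23 A34 A45 A51
  rw [abs1'] at D13 D24 D35 D41 D52
  have B1 := hb _ m1; have B2 := hb _ m2; have B3 := hb _ m3
  have B4 := hb _ m4; have B5 := hb _ m5
  omega

lemma no_P6 {a b c d e g : V} (h1 : G.Adj a b) (h2 : G.Adj b c) (h3 : G.Adj c d)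
    (h4 : G.Adj d e) (h5 : G.Adj e g) (hac : a ≠ c) (had : a ≠ d) (hbd : b ≠ d)
    (hbe : b ≠ e) (hce : c ≠ e) (hcg : c ≠ g) (hdg : d ≠ g) : False := by
  have m1 := G.mem_edgeSet.2 h1
  have m2 := G.mem_edgeSet.2 h2
  have m3 := G.mem_edgeSet.2 h3
  have m4 := G.mem_edgeSet.2 h4
  have m5 := G.mem_edgeSet.2 h5
  have A12 := hf.1 _ m1 _ m2 (edgeAdj_cons h1.ne hac)
  have A23 := hf.1 _ m2 _ m3 (edgeAdj_cons h2.ne hbd)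
  have A34 := hf.1 _ m3 _ m4 (edgeAdj_cons h3.ne hce)
  have A45 := hf.1 _ m4 _ m5 (edgeAdj_cons h4.ne hdg)
  have D13 := hf.2 _ m1 _ m3 (edgeDist2_path h2 hac had hbd)
  have D24 := hf.2 _ m2 _ m4 (edgeDist2_path h3 hbd hbe hce)
  have D35 := hf.2 _ m3 _ m5 (edgeDist2_path h4 hce hcg hdg)
  rw [abs2'] at A12 A23 A34 A45
  rw [abs1'] at D13 D24 D35
  have B1 := hb _ m1; have B2 := hb _ m2; have B3 := hb _ m3
  have B4 := hb _ m4; have B5 := hb _ m5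
  omega

end Forbidden

/-- P4 needs labels beyond 2. -/
lemma no_P4_two {V : Type*} {G : SimpleGraph V} {f : Sym2 V → ℕ}
    (hf : IsDistEdgeLabeling G f) (hb : ∀ e ∈ G.edgeSet, f e ≤ 2)
    {a b c d : V} (h1 : G.Adj a b) (h2 : G.Adj b c) (h3 : G.Adj c d)
    (hac : a ≠ c) (had : a ≠ d) (hbd : b ≠ d) : False := by
  have m1 := G.mem_edgeSet.2 h1
  have m2 := G.mem_edgeSet.2 h2
  have m3 := G.mem_edgeSet.2 h3
  have A12 := hf.1 _ m1 _ m2 (edgeAdj_cons h1.ne hac)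
  have A23 := hf.1 _ m2 _ m3 (edgeAdj_cons h2.ne hbd)
  have D13 := hf.2 _ m1 _ m3 (edgeDist2_path h2 hac had hbd)
  rw [abs2'] at A12 A23
  rw [abs1'] at D13
  have B1 := hb _ m1; have B2 := hb _ m2; have B3 := hb _ m3
  omega

/-! ### Building an isomorphism from a vertex list -/

lemma mem_of_closed {V : Type*} {G : SimpleGraph V} {S : Set V}
    (hS : ∀ x ∈ S, ∀ y, G.Adj x y → y ∈ S) {u v : V} (h : G.Reachable u v) :
    u ∈ S → v ∈ S := by
  obtain ⟨w⟩ := h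
  induction w with
  | nil => exact id
  | cons h p ih => exact fun hu => ih (hS _ hu _ h)

lemma iso_of_list {V : Type*} (G : SimpleGraph V) (l : List V) (hnd : l.Nodup)
    (hcov : ∀ v, v ∈ l)
    (hadj : ∀ i j : Fin l.length,
      G.Adj (l.get i) (l.get j) ↔ ((i : ℕ) + 1 = j ∨ (j : ℕ) + 1 = i)) :
    Nonempty (G ≃g pathGraph l.length) := by
  have inj : Function.Injective l.get := List.nodup_iff_injective_get.mp hnd
  have surj : Function.Surjective l.get := fun v => by
    obtain ⟨n, hn⟩ := List.mem_iff_get.mp (hcov v); exact ⟨n, hn⟩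
  let e : Fin l.length ≃ V := Equiv.ofBijective l.get ⟨inj, surj⟩
  refine ⟨⟨e.symm, ?_⟩⟩
  intro a b
  rw [pathGraph_adj]
  have ha : l.get (e.symm a) = a := e.apply_symm_apply a
  have hb : l.get (e.symm b) = b := e.apply_symm_apply b
  have h2 := hadj (e.symm a) (e.symm b)
  rw [ha, hb] at h2
  exact h2.symm

/-! ### The structural classification -/

lemma structure_lemma {V : Type*} [Fintype V] {G : SimpleGraph V} {f : Sym2 V → ℕ}
    (hf : IsDistEdgeLabeling G f) (hb : ∀ e ∈ G.edgeSet, f e ≤ 3)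
    (hc : G.Connected) (hE : G.edgeSet.Nonempty) :
    ∃ n : ℕ, 2 ≤ n ∧ n ≤ 5 ∧ Nonempty (G ≃g pathGraph n) := by
  classical
  have hEE : ∃ a b : V, G.Adj a b := by
    obtain ⟨e, he⟩ := hE
    revert he
    refine e.ind ?_
    intro a b h
    exact ⟨a, b, G.mem_edgeSet.1 h⟩
  -- an endpoint exists
  have hend : ∃ v0 v1 : V, G.Adj v0 v1 ∧ ∀ x, G.Adj v0 x → x = v1 := by
    by_contra hno
    push_neg at hno
    obtain ⟨u0, u1, h01⟩ := hEE
    obtain ⟨u2, h12, h20⟩ := hno u1 u0 h01.symm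
    obtain ⟨u3, h23, h31⟩ := hno u2 u1 h12.symm
    have h30 : u3 ≠ u0 := fun h => no_C3 hf hb h01 h12 (h ▸ h23)
    obtain ⟨u4, h34, h42⟩ := hno u3 u2 h23.symm
    have h41 : u4 ≠ u1 := fun h =>
      no_deg3 hf hb (Ne.symm h20) (Ne.symm h30) (Ne.symm h23.ne') h01.symm h12 (h ▸ h34).symm
    have h40 : u4 ≠ u0 := fun h => no_C4 hf hb h01 h12 h23 (h ▸ h34) (Ne.symm h20) (Ne.symm h31)
    obtain ⟨u5, h45, h53⟩ := hno u4 u3 h34.symm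
    have h52 : u5 ≠ u2 := fun h =>
      no_deg3 hf hb (Ne.symm h31) (Ne.symm h41) h34.ne h12.symm h23 (h ▸ h45).symm
    have h51 : u5 ≠ u1 := fun h =>
      no_deg3 hf hb (Ne.symm h20) (Ne.symm h40) (Ne.symm h42) h01.symm h12 (h ▸ h45).symm
    have h50 : u5 ≠ u0 := fun h =>
      no_C5 hf hb h01 h12 h23 h34 (h ▸ h45) (Ne.symm h20) (Ne.symm h30) (Ne.symm h31)
        (Ne.symm h41) (Ne.symm h42)
    exact no_P6 hf hb h01 h12 h23 h34 h45 (Ne.symm h20) (Ne.symm h30) (Ne.symm h31)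
      (Ne.symm h41) (Ne.symm h42) (Ne.symm h52) (Ne.symm h53)
  obtain ⟨v0, v1, a01, hend0⟩ := hend
  have n01 : v0 ≠ v1 := a01.ne
  by_cases hstop1 : ∀ z, G.Adj v1 z → z = v0
  · -- G ≅ P2
    refine ⟨2, by norm_num, by norm_num, ?_⟩
    have hclosed : ∀ x ∈ ({v0, v1} : Set V), ∀ y, G.Adj x y → y ∈ ({v0, v1} : Set V) := by
      rintro x (rfl|rfl) y hy
      · simp [hend0 y hy]
      · simp [hstop1 y hy]
    have hcov : ∀ v, v ∈ [v0, v1] := by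
      intro v
      have := mem_of_closed hclosed (hc.preconnected v0 v) (by simp)
      simpa using this
    have hnd : ([v0, v1] : List V).Nodup := by simp [n01]
    exact iso_of_list G [v0, v1] hnd hcov (by
      intro i j
      fin_cases i <;> fin_cases j <;>
        simp [List.get, a01, a01.symm, G.irrefl])
  push_neg at hstop1
  obtain ⟨v2, a12, n20'⟩ := hstop1
  have n20 : v2 ≠ v0 := n20'
  have n21 : v2 ≠ v1 := a12.ne'
  by_cases hstop2 : ∀ z, G.Adj v2 z → z = v1
  · refine ⟨3, by norm_num, by norm_num, ?_⟩
    have na02 : ¬ G.Adj v0 v2 := fun h => n21 (hend0 v2 h)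
    have na20 : ¬ G.Adj v2 v0 := fun h => na02 h.symm
    have hclosed : ∀ x ∈ ({v0, v1, v2} : Set V), ∀ y, G.Adj x y → y ∈ ({v0, v1, v2} : Set V) := by
      rintro x (rfl|rfl|rfl) y hy
      · simp [hend0 y hy]
      · rcases (by
          by_contra hcon
          push_neg at hcon
          exact no_deg3 hf hb hcon.1 hcon.2.1 hcon.2.2 a01.symm a12 hy :
          v0 = v2 ∨ v0 = y ∨ v2 = y) with h|h|h
        · exact absurd h (Ne.symm n20)
        · simp [← h]
        · simp [← h]
      · simp [hstop2 y hy]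
    have hcov : ∀ v, v ∈ [v0, v1, v2] := by
      intro v
      have := mem_of_closed hclosed (hc.preconnected v0 v) (by simp)
      simpa using this
    have hnd : ([v0, v1, v2] : List V).Nodup := by
      simp [n01, Ne.symm n20, Ne.symm n21]
    exact iso_of_list G [v0, v1, v2] hnd hcov (by
      intro i j
      fin_cases i <;> fin_cases j <;>
        simp [List.get, a01, a01.symm, a12, a12.symm, na02, na20, G.irrefl])
  push_neg at hstop2
  obtain ⟨v3, a23, n31'⟩ := hstop2
  have n31 : v3 ≠ v1 := n31'
  have n32 : v3 ≠ v2 := a23.ne'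
  have n30 : v3 ≠ v0 := fun h => n21 (hend0 v2 (h ▸ a23).symm)
  by_cases hstop3 : ∀ z, G.Adj v3 z → z = v2
  · refine ⟨4, by norm_num, by norm_num, ?_⟩
    have na02 : ¬ G.Adj v0 v2 := fun h => n21 (hend0 v2 h)
    have na03 : ¬ G.Adj v0 v3 := fun h => n31 (hend0 v3 h)
    have na13 : ¬ G.Adj v1 v3 := fun h => a12.ne (hstop3 v1 h.symm)
    have na20 : ¬ G.Adj v2 v0 := fun h => na02 h.symm
    have na30 : ¬ G.Adj v3 v0 := fun h => na03 h.symm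
    have na31 : ¬ G.Adj v3 v1 := fun h => na13 h.symm
    have hclosed : ∀ x ∈ ({v0, v1, v2, v3} : Set V), ∀ y, G.Adj x y →
        y ∈ ({v0, v1, v2, v3} : Set V) := by
      rintro x (rfl|rfl|rfl|rfl) y hy
      · simp [hend0 y hy]
      · rcases (by
          by_contra hcon
          push_neg at hcon
          exact no_deg3 hf hb hcon.1 hcon.2.1 hcon.2.2 a01.symm a12 hy :
          v0 = v2 ∨ v0 = y ∨ v2 = y) with h|h|h
        · exact absurd h (Ne.symm n20)
        · simp [← h]
        · simp [← h]
      · rcases (by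
          by_contra hcon
          push_neg at hcon
          exact no_deg3 hf hb hcon.1 hcon.2.1 hcon.2.2 a12.symm a23 hy :
          v1 = v3 ∨ v1 = y ∨ v3 = y) with h|h|h
        · exact absurd h (Ne.symm n31)
        · simp [← h]
        · simp [← h]
      · simp [hstop3 y hy]
    have hcov : ∀ v, v ∈ [v0, v1, v2, v3] := by
      intro v
      have := mem_of_closed hclosed (hc.preconnected v0 v) (by simp)
      simpa using this
    have hnd : ([v0, v1, v2, v3] : List V).Nodup := by
      simp [n01, Ne.symm n20, Ne.symm n30, Ne.symm n21, Ne.symm n31, Ne.symm n32]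
    exact iso_of_list G [v0, v1, v2, v3] hnd hcov (by
      intro i j
      fin_cases i <;> fin_cases j <;>
        simp [List.get, a01, a01.symm, a12, a12.symm, a23, a23.symm, na02, na03, na13,
          na20, na30, na31, G.irrefl])
  push_neg at hstop3
  obtain ⟨v4, a34, n42'⟩ := hstop3
  have n42 : v4 ≠ v2 := n42'
  have n43 : v4 ≠ v3 := a34.ne'
  have n41 : v4 ≠ v1 := fun h =>
    no_deg3 hf hb (Ne.symm n20) (Ne.symm n30) a23.ne a01.symm a12 (h ▸ a34).symm
  have n40 : v4 ≠ v0 := fun h => n31 (hend0 v3 (h ▸ a34).symm)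
  by_cases hstop4 : ∀ z, G.Adj v4 z → z = v3
  · refine ⟨5, by norm_num, by norm_num, ?_⟩
    have na02 : ¬ G.Adj v0 v2 := fun h => n21 (hend0 v2 h)
    have na03 : ¬ G.Adj v0 v3 := fun h => n31 (hend0 v3 h)
    have na04 : ¬ G.Adj v0 v4 := fun h => n41 (hend0 v4 h)
    have na13 : ¬ G.Adj v1 v3 := fun h =>
      no_deg3 hf hb (Ne.symm n20) (Ne.symm n30) a23.ne a01.symm a12 h
    have na14 : ¬ G.Adj v1 v4 := fun h =>
      no_deg3 hf hb (Ne.symm n20) (Ne.symm n40) (Ne.symm n42) a01.symm a12 h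
    have na24 : ¬ G.Adj v2 v4 := fun h => a23.ne (hstop4 v2 h.symm)
    have na20 : ¬ G.Adj v2 v0 := fun h => na02 h.symm
    have na30 : ¬ G.Adj v3 v0 := fun h => na03 h.symm
    have na40 : ¬ G.Adj v4 v0 := fun h => na04 h.symm
    have na31 : ¬ G.Adj v3 v1 := fun h => na13 h.symm
    have na41 : ¬ G.Adj v4 v1 := fun h => na14 h.symm
    have na42 : ¬ G.Adj v4 v2 := fun h => na24 h.symm
    have hclosed : ∀ x ∈ ({v0, v1, v2, v3, v4} : Set V), ∀ y, G.Adj x y →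
        y ∈ ({v0, v1, v2, v3, v4} : Set V) := by
      rintro x (rfl|rfl|rfl|rfl|rfl) y hy
      · simp [hend0 y hy]
      · rcases (by
          by_contra hcon
          push_neg at hcon
          exact no_deg3 hf hb hcon.1 hcon.2.1 hcon.2.2 a01.symm a12 hy :
          v0 = v2 ∨ v0 = y ∨ v2 = y) with h|h|h
        · exact absurd h (Ne.symm n20)
        · simp [← h]
        · simp [← h]
      · rcases (by
          by_contra hcon
          push_neg at hcon
          exact no_deg3 hf hb hcon.1 hcon.2.1 hcon.2.2 a12.symm a23 hy :
          v1 = v3 ∨ v1 = y ∨ v3 = y) with h|h|h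
        · exact absurd h (Ne.symm n31)
        · simp [← h]
        · simp [← h]
      · rcases (by
          by_contra hcon
          push_neg at hcon
          exact no_deg3 hf hb hcon.1 hcon.2.1 hcon.2.2 a23.symm a34 hy :
          v2 = v4 ∨ v2 = y ∨ v4 = y) with h|h|h
        · exact absurd h (Ne.symm n42)
        · simp [← h]
        · simp [← h]
      · simp [hstop4 y hy]
    have hcov : ∀ v, v ∈ [v0, v1, v2, v3, v4] := by
      intro v
      have := mem_of_closed hclosed (hc.preconnected v0 v) (by simp)
      simpa using this
    have hnd : ([v0, v1, v2, v3, v4] : List V).Nodup := by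
      simp [n01, Ne.symm n20, Ne.symm n30, Ne.symm n40, Ne.symm n21, Ne.symm n31,
        Ne.symm n41, Ne.symm n32, Ne.symm n42, Ne.symm n43]
    exact iso_of_list G [v0, v1, v2, v3, v4] hnd hcov (by
      intro i j
      fin_cases i <;> fin_cases j <;>
        simp [List.get, a01, a01.symm, a12, a12.symm, a23, a23.symm, a34, a34.symm,
          na02, na03, na04, na13, na14, na24, na20, na30, na40, na31, na41, na42,
          G.irrefl])
  push_neg at hstop4
  obtain ⟨v5, a45, n53'⟩ := hstop4
  have n53 : v5 ≠ v3 := n53'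
  have n54 : v5 ≠ v4 := a45.ne'
  have n52 : v5 ≠ v2 := fun h =>
    no_deg3 hf hb (Ne.symm n31) (Ne.symm n41) a34.ne a12.symm a23 (h ▸ a45).symm
  have n51 : v5 ≠ v1 := fun h =>
    no_deg3 hf hb (Ne.symm n20) (Ne.symm n40) (Ne.symm n42) a01.symm a12 (h ▸ a45).symm
  have n50 : v5 ≠ v0 := fun h => n41 (hend0 v4 (h ▸ a45).symm)
  exact absurd (no_P6 hf hb a01 a12 a23 a34 a45 (Ne.symm n20) (Ne.symm n30) (Ne.symm n31)
    (Ne.symm n41) (Ne.symm n42) (Ne.symm n52) (Ne.symm n53)) not_false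

/-! ### Explicit labelings for small paths -/

def labP2 : Sym2 (Fin 2) → ℕ := fun _ => 0
def labP3 : Sym2 (Fin 3) → ℕ := fun e => if e = s(0,1) then 0 else 2
def labP4 : Sym2 (Fin 4) → ℕ := fun e =>
  if e = s(0,1) then 2 else if e = s(1,2) then 0 else 3
def labP5 : Sym2 (Fin 5) → ℕ := fun e =>
  if e = s(0,1) then 1 else if e = s(1,2) then 3 else if e = s(2,3) then 0 else 2

lemma hasLab_P2 : HasLab (pathGraph 2) 2 := by
  have h : IsDistEdgeLabeling (pathGraph 2) labP2 ∧
      ∀ e ∈ (pathGraph 2).edgeSet, labP2 e ≤ 2 := by decide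
  exact ⟨labP2, h.1, h.2⟩

lemma hasLab_P3 : HasLab (pathGraph 3) 2 := by
  have h : IsDistEdgeLabeling (pathGraph 3) labP3 ∧
      ∀ e ∈ (pathGraph 3).edgeSet, labP3 e ≤ 2 := by decide
  exact ⟨labP3, h.1, h.2⟩

lemma hasLab_P4 : HasLab (pathGraph 4) 3 := by
  have h : IsDistEdgeLabeling (pathGraph 4) labP4 ∧
      ∀ e ∈ (pathGraph 4).edgeSet, labP4 e ≤ 3 := by decide
  exact ⟨labP4, h.1, h.2⟩

lemma hasLab_P5 : HasLab (pathGraph 5) 3 := by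
  have h : IsDistEdgeLabeling (pathGraph 5) labP5 ∧
      ∀ e ∈ (pathGraph 5).edgeSet, labP5 e ≤ 3 := by decide
  exact ⟨labP5, h.1, h.2⟩

/-! ### Main theorem -/

theorem stmt5 {V : Type*} [Fintype V] (G : SimpleGraph V) (hc : G.Connected) :
    lambdaE G = 3 ↔
      (Nonempty (G ≃g SimpleGraph.pathGraph 4) ∨ Nonempty (G ≃g SimpleGraph.pathGraph 5)) := by
  rw [lambdaE_eq_three_iff]
  constructor
  · rintro ⟨⟨f, hf, hb⟩, h2⟩
    have hE : G.edgeSet.Nonempty := by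
      rw [Set.nonempty_iff_ne_empty]
      intro hemp
      exact h2 ⟨fun _ => 0,
        ⟨fun e he => by rw [hemp] at he; exact absurd he (Set.notMem_empty e),
         fun e he => by rw [hemp] at he; exact absurd he (Set.notMem_empty e)⟩,
        fun e he => by rw [hemp] at he; exact absurd he (Set.notMem_empty e)⟩
    obtain ⟨n, hn2, hn5, ⟨φ⟩⟩ := structure_lemma hf hb hc hE
    interval_cases n
    · exact absurd (hasLab_of_iso φ hasLab_P2) h2
    · exact absurd (hasLab_of_iso φ hasLab_P3) h2
    · exact Or.inl ⟨φ⟩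
    · exact Or.inr ⟨φ⟩
  · rintro (h | h) <;> obtain ⟨φ⟩ := h
    · refine ⟨hasLab_of_iso φ hasLab_P4, ?_⟩
      rintro ⟨f, hf, hb⟩
      have hinj : Function.Injective φ.symm := φ.symm.toEquiv.injective
      have hP : ∀ i j : Fin 4, (pathGraph 4).Adj i j → G.Adj (φ.symm i) (φ.symm j) :=
        fun i j h => φ.symm.map_rel_iff.2 h
      exact no_P4_two hf hb (hP 0 1 (by decide)) (hP 1 2 (by decide)) (hP 2 3 (by decide))
        (fun h => absurd (hinj h) (by decide)) (fun h => absurd (hinj h) (by decide))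
        (fun h => absurd (hinj h) (by decide))
    · refine ⟨hasLab_of_iso φ hasLab_P5, ?_⟩
      rintro ⟨f, hf, hb⟩
      have hinj : Function.Injective φ.symm := φ.symm.toEquiv.injective
      have hP : ∀ i j : Fin 5, (pathGraph 5).Adj i j → G.Adj (φ.symm i) (φ.symm j) :=
        fun i j h => φ.symm.map_rel_iff.2 h
      exact no_P4_two hf hb (hP 0 1 (by decide)) (hP 1 2 (by decide)) (hP 2 3 (by decide))
        (fun h => absurd (hinj h) (by decide)) (fun h => absurd (hinj h) (by decide))
        (fun h => absurd (hinj h) (by decide))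
end

section
/- If G is a connected graph with λ'(G) ≤ 4, then every vertex of G has degree at most 3, and moreover every vertex of degree 3 has at least one neighbor of degree 1. -/
open SimpleGraph

/-- The set defining `lambdaE` is nonempty: spread out distinct labels. -/
lemma labeling_set_nonempty {V : Type*} [Fintype V] [DecidableEq V] (G : SimpleGraph V) :
    {l | ∃ f : Sym2 V → ℕ, IsDistEdgeLabeling G f ∧ ∀ e ∈ G.edgeSet, f e ≤ l}.Nonempty := by
  classical
  set f : Sym2 V → ℕ := fun e => 2 * ((Fintype.equivFin (Sym2 V)) e : ℕ) with hf
  refine ⟨2 * Fintype.card (Sym2 V), f, ⟨?_, ?_⟩, ?_⟩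
  · intro e _ e' _ hadj
    have hne : ((Fintype.equivFin (Sym2 V)) e : ℕ) ≠ ((Fintype.equivFin (Sym2 V)) e' : ℕ) := by
      intro hcon
      exact hadj.1 ((Fintype.equivFin (Sym2 V)).injective (Fin.ext hcon))
    rw [le_abs]; simp only [hf]; omega
  · intro e _ e' _ hd
    have hne : ((Fintype.equivFin (Sym2 V)) e : ℕ) ≠ ((Fintype.equivFin (Sym2 V)) e' : ℕ) := by
      intro hcon
      exact hd.2.1 ((Fintype.equivFin (Sym2 V)).injective (Fin.ext hcon))
    rw [le_abs]; simp only [hf]; omega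
  · intro e _
    have := ((Fintype.equivFin (Sym2 V)) e).isLt
    simp only [hf]; omega

theorem stmt6 {V : Type*} [Fintype V] [DecidableEq V] (G : SimpleGraph V)
    [DecidableRel G.Adj] (hc : G.Connected) (h : lambdaE G ≤ 4) :
    ∀ v : V, G.degree v ≤ 3 ∧
      (G.degree v = 3 → ∃ u : V, G.Adj v u ∧ G.degree u = 1) := by
  classical
  obtain ⟨f, ⟨hf1, hf2⟩, hb⟩ := Nat.sInf_mem (labeling_set_nonempty G)
  have hb4 : ∀ e ∈ G.edgeSet, f e ≤ 4 := fun e he => le_trans (hb e he) h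
  intro v
  -- edges at v
  have hedge : ∀ u ∈ G.neighborFinset v, s(v, u) ∈ G.edgeSet := by
    intro u hu
    exact G.mem_edgeSet.mpr ((G.mem_neighborFinset v u).mp hu)
  -- any two distinct edges at v get labels differing by ≥ 2
  have hpair : ∀ u ∈ G.neighborFinset v, ∀ u' ∈ G.neighborFinset v, u ≠ u' →
      2 ≤ |(f s(v, u) : ℤ) - (f s(v, u') : ℤ)| := by
    intro a ha b hb' hab
    refine hf1 _ (hedge a ha) _ (hedge b hb') ⟨?_, v, ?_, ?_⟩
    · intro hcon; exact hab (Sym2.congr_right.mp hcon)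
    · exact Sym2.mem_mk_left v a
    · exact Sym2.mem_mk_left v b
  set φ : V → ℕ := fun u => f s(v, u) / 2 with hφ
  have hinj : Set.InjOn φ (G.neighborFinset v) := by
    intro a ha b hb' hab
    by_contra hne
    have h2 := hpair a ha b hb' hne
    rw [le_abs] at h2
    simp only [hφ] at hab
    omega
  have hmaps : ∀ u ∈ G.neighborFinset v, φ u ∈ Finset.range 3 := by
    intro u hu
    have := hb4 _ (hedge u hu)
    simp only [hφ, Finset.mem_range]
    omega
  have hcard : G.degree v ≤ 3 := by
    have h3 := Finset.card_le_card_of_injOn φ hmaps hinj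
    rw [Finset.card_range] at h3
    exact h3
  refine ⟨hcard, fun hdeg => ?_⟩
  -- image of φ is all of range 3
  have himg : (G.neighborFinset v).image φ = Finset.range 3 := by
    apply Finset.eq_of_subset_of_card_le
    · intro x hx
      obtain ⟨u, hu, rfl⟩ := Finset.mem_image.mp hx
      exact hmaps u hu
    · rw [Finset.card_range, Finset.card_image_of_injOn hinj]
      exact le_of_eq hdeg.symm
  have hget : ∀ k < 3, ∃ u ∈ G.neighborFinset v, φ u = k := by
    intro k hk
    have : k ∈ (G.neighborFinset v).image φ := by rw [himg]; exact Finset.mem_range.mpr hk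
    obtain ⟨u, hu, hval⟩ := Finset.mem_image.mp this
    exact ⟨u, hu, hval⟩
  obtain ⟨u0, hu0, hv0⟩ := hget 0 (by norm_num)
  obtain ⟨u2, hu2, hv2⟩ := hget 1 (by norm_num)
  obtain ⟨u4, hu4, hv4⟩ := hget 2 (by norm_num)
  have h04 : f s(v, u4) = 4 := by
    have := hb4 _ (hedge u4 hu4); simp only [hφ] at hv4; omega
  have h02 : f s(v, u2) = 2 := by
    have h24 := hpair u2 hu2 u4 hu4 (by intro hcon; rw [hcon] at hv2; omega)
    rw [le_abs] at h24
    simp only [hφ] at hv2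
    omega
  have h00 : f s(v, u0) = 0 := by
    have h022 := hpair u0 hu0 u2 hu2 (by intro hcon; rw [hcon] at hv0; omega)
    rw [le_abs] at h022
    simp only [hφ] at hv0
    omega
  have hadj2 : G.Adj v u2 := (G.mem_neighborFinset v u2).mp hu2
  refine ⟨u2, hadj2, ?_⟩
  have hu2v : u2 ≠ v := (G.ne_of_adj hadj2).symm
  -- show neighborFinset u2 = {v}
  have hset : G.neighborFinset u2 = {v} := by
    apply Finset.eq_singleton_iff_unique_mem.mpr
    refine ⟨(G.mem_neighborFinset u2 v).mpr hadj2.symm, ?_⟩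
    intro w hw
    by_contra hwv
    have hadjw : G.Adj u2 w := (G.mem_neighborFinset u2 w).mp hw
    have hwu2 : w ≠ u2 := (G.ne_of_adj hadjw).symm
    have hg : s(u2, w) ∈ G.edgeSet := G.mem_edgeSet.mpr hadjw
    -- g is adjacent to e2 = s(v,u2)
    have hgne2 : s(u2, w) ≠ s(v, u2) := by
      intro hcon
      rw [Sym2.eq_iff] at hcon
      rcases hcon with ⟨h1, h2⟩ | ⟨h1, h2⟩
      · exact hwu2 h2
      · exact hwv h2
    have hgadj2 : edgeAdj s(u2, w) s(v, u2) :=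
      ⟨hgne2, u2, Sym2.mem_mk_left u2 w, Sym2.mem_mk_right v u2⟩
    have hkey := hf1 _ hg _ (hedge u2 hu2) hgadj2
    rw [le_abs, h02] at hkey
    have hgb := hb4 _ hg
    -- f s(u2,w) = 0 or 4
    have hval : f s(u2, w) = 0 ∨ f s(u2, w) = 4 := by omega
    -- v is not in g
    have hvng : v ∉ s(u2, w) := by
      rw [Sym2.mem_iff]
      push_neg
      exact ⟨fun hcon => hu2v hcon.symm, fun hcon => hwv hcon.symm⟩
    -- generic contradiction: if f s(u2,w) = f s(v,uc) for uc a neighbor ≠ u2 of v, contradiction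
    have hcontra : ∀ uc ∈ G.neighborFinset v, uc ≠ u2 →
        f s(u2, w) = f s(v, uc) → False := by
      intro uc huc hucne hfeq
      have hgnec : s(u2, w) ≠ s(v, uc) := by
        intro hcon
        apply hvng
        rw [hcon]
        exact Sym2.mem_mk_left v uc
      have he2c : edgeAdj s(v, u2) s(v, uc) := by
        refine ⟨?_, v, Sym2.mem_mk_left v u2, Sym2.mem_mk_left v uc⟩
        intro hcon
        exact hucne (Sym2.congr_right.mp hcon).symm
      by_cases hca : edgeAdj s(u2, w) s(v, uc)
      · have := hf1 _ hg _ (hedge uc huc) hca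
        rw [hfeq] at this
        simp at this
      · have hd2 : edgeDist2 G s(u2, w) s(v, uc) :=
          ⟨hca, hgnec, s(v, u2), hedge u2 hu2,
            ⟨hgne2, u2, Sym2.mem_mk_left u2 w, Sym2.mem_mk_right v u2⟩, he2c⟩
        have := hf2 _ hg _ (hedge uc huc) hd2
        rw [hfeq] at this
        simp at this
    rcases hval with hval | hval
    · exact hcontra u0 hu0 (by intro hcon; rw [hcon] at hv0; omega) (by rw [hval, h00])
    · exact hcontra u4 hu4 (by intro hcon; rw [hcon] at hv4; omega) (by rw [hval, h04])
  show (G.neighborFinset u2).card = 1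
  rw [hset, Finset.card_singleton]
end

section
/- If G is a connected graph with λ'(G) ≤ 4, then G is either a generalized path or a generalized cycle, where a generalized path (resp. generalized cycle) is a path (resp. cycle) with zero or more pendant edges attached, each attached vertex of the path/cycle receiving at most one pendant edge and having total degree at most 3. -/
set_option maxHeartbeats 1600000


open SimpleGraph Walk

/-- `G` is a path with core `p 0, …, p n` together with pendant edges: every vertex off the
core has a unique neighbor, which lies on the core, and every core vertex has at most one
pendant neighbor. -/
def IsGenPathCore {V : Type*} (G : SimpleGraph V) (n : ℕ) (p : Fin (n + 1) → V) : Prop :=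
  Function.Injective p ∧
  (∀ i j, G.Adj (p i) (p j) ↔ (i.val + 1 = j.val ∨ j.val + 1 = i.val)) ∧
  (∀ v, v ∉ Set.range p → (∃! w, G.Adj v w) ∧ ∃ i, G.Adj v (p i)) ∧
  (∀ i, {v | v ∉ Set.range p ∧ G.Adj v (p i)}.Subsingleton)

/-- `G` is a cycle of length `n + 3` with core `p 0, …, p (n+2)` (cyclically) together with
pendant edges. -/
def IsGenCycleCore {V : Type*} (G : SimpleGraph V) (n : ℕ) (p : Fin (n + 3) → V) : Prop :=
  Function.Injective p ∧
  (∀ i j, G.Adj (p i) (p j) ↔ (j = i + 1 ∨ i = j + 1)) ∧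
  (∀ v, v ∉ Set.range p → (∃! w, G.Adj v w) ∧ ∃ i, G.Adj v (p i)) ∧
  (∀ i, {v | v ∉ Set.range p ∧ G.Adj v (p i)}.Subsingleton)

namespace Aux
variable {V : Type*} {G : SimpleGraph V}

variable {V : Type*}

lemma sym2_ne {a b c d : V} (h1 : a ≠ c ∨ b ≠ d) (h2 : a ≠ d ∨ b ≠ c) :
    s(a,b) ≠ s(c,d) := by rw [Ne, Sym2.eq_iff]; tauto

lemma edgeAdj_same {a b c : V} (hbc : b ≠ c) (hac : a ≠ c) : edgeAdj s(a,b) s(a,c) :=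
  ⟨sym2_ne (Or.inr hbc) (Or.inl hac), a, by simp, by simp⟩

lemma not_edgeAdj {a b c d : V} (h1 : a ≠ c) (h2 : a ≠ d) (h3 : b ≠ c) (h4 : b ≠ d) :
    ¬ edgeAdj s(a,b) s(c,d) := by
  rintro ⟨-, v, hv1, hv2⟩
  rw [Sym2.mem_iff] at hv1 hv2
  rcases hv1 with rfl | rfl <;> rcases hv2 with h | h <;> tauto

variable {G : SimpleGraph V} {f : Sym2 V → ℕ}

lemma two_sep (hf : IsDistEdgeLabeling G f) {a b c d : V}
    (h1 : G.Adj a b) (h2 : G.Adj c d) (he : edgeAdj s(a,b) s(c,d)) :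
    f s(a,b) + 2 ≤ f s(c,d) ∨ f s(c,d) + 2 ≤ f s(a,b) := by
  have := hf.1 _ h1 _ h2 he
  rw [le_abs] at this
  omega

lemma one_sep (hf : IsDistEdgeLabeling G f) {a b c d : V}
    (h1 : G.Adj a b) (h2 : G.Adj c d) (he : edgeDist2 G s(a,b) s(c,d)) :
    f s(a,b) ≠ f s(c,d) := by
  have := hf.2 _ h1 _ h2 he
  rw [le_abs] at this
  omega

section Labeling
variable (hf : IsDistEdgeLabeling G f) (hb : ∀ e ∈ G.edgeSet, f e ≤ 4)
include hf hb

/-- No vertex has four distinct neighbors. -/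
lemma no4 {v a b c d : V} (ha : G.Adj v a) (hb' : G.Adj v b) (hc : G.Adj v c) (hd : G.Adj v d)
    (h1 : a ≠ b) (h2 : a ≠ c) (h3 : a ≠ d) (h4 : b ≠ c) (h5 : b ≠ d) (h6 : c ≠ d) : False := by
  have e1 := two_sep hf ha hb' (edgeAdj_same h1 hb'.ne)
  have e2 := two_sep hf ha hc (edgeAdj_same h2 hc.ne)
  have e3 := two_sep hf ha hd (edgeAdj_same h3 hd.ne)
  have e4 := two_sep hf hb' hc (edgeAdj_same h4 hc.ne)
  have e5 := two_sep hf hb' hd (edgeAdj_same h5 hd.ne)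
  have e6 := two_sep hf hc hd (edgeAdj_same h6 hd.ne)
  have b1 := hb _ (G.mem_edgeSet.mpr ha)
  have b2 := hb _ (G.mem_edgeSet.mpr hb')
  have b3 := hb _ (G.mem_edgeSet.mpr hc)
  have b4 := hb _ (G.mem_edgeSet.mpr hd)
  omega

lemma mid_leaf {v x pp qq : V} (hvx : G.Adj v x) (hvp : G.Adj v pp) (hvq : G.Adj v qq)
    (hxp : x ≠ pp) (hxq : x ≠ qq) (hpq : pp ≠ qq)
    (l2 : f s(v,x) = 2) (l0 : f s(v,pp) = 0) (l4 : f s(v,qq) = 4) :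
    ∀ y, G.Adj x y → y = v := by
  have hxv : x ≠ v := hvx.ne'
  have hpv : pp ≠ v := hvp.ne'
  have hqv : qq ≠ v := hvq.ne'
  intro y hy
  by_contra hyv
  have hyx : y ≠ x := hy.ne'
  have hbg : f s(x,y) ≤ 4 := hb _ (G.mem_edgeSet.mpr hy)
  have e1 : f s(x,y) + 2 ≤ f s(x,v) ∨ f s(x,v) + 2 ≤ f s(x,y) :=
    two_sep hf hy hvx.symm (edgeAdj_same hyv hxv)
  rw [Sym2.eq_swap (a := x) (b := v), l2] at e1
  have hg04 : f s(x,y) = 0 ∨ f s(x,y) = 4 := by omega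
  have dist2w : ∀ w, G.Adj v w → x ≠ w → y ≠ w → edgeDist2 G s(x,y) s(v,w) := by
    intro w hvw hxw hyw
    exact ⟨not_edgeAdj hxv hxw hyv hyw, sym2_ne (Or.inl hxv) (Or.inl hxw), s(v,x),
      G.mem_edgeSet.mpr hvx, ⟨sym2_ne (Or.inl hxv) (Or.inr hyv), x, by simp, by simp⟩,
      ⟨sym2_ne (Or.inr hxw) (Or.inr hxv), v, by simp, by simp⟩⟩
  by_cases hyp : y = pp
  · subst hyp
    have e2 : f s(y,x) + 2 ≤ f s(y,v) ∨ f s(y,v) + 2 ≤ f s(y,x) :=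
      two_sep hf hy.symm hvp.symm (edgeAdj_same hxv hpv)
    rw [Sym2.eq_swap (a := y) (b := x), Sym2.eq_swap (a := y) (b := v), l0] at e2
    have hg4 : f s(x, y) = 4 := by omega
    have := one_sep hf hy hvq (dist2w qq hvq hxq hpq)
    rw [l4] at this
    exact this hg4
  · by_cases hyq : y = qq
    · subst hyq
      have e2 : f s(y,x) + 2 ≤ f s(y,v) ∨ f s(y,v) + 2 ≤ f s(y,x) :=
        two_sep hf hy.symm hvq.symm (edgeAdj_same hxv hqv)
      rw [Sym2.eq_swap (a := y) (b := x), Sym2.eq_swap (a := y) (b := v), l4] at e2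
      have hg0 : f s(x, y) = 0 := by omega
      have := one_sep hf hy hvp (dist2w pp hvp hxp (Ne.symm hpq))
      rw [l0] at this
      exact this hg0
    · have n0 := one_sep hf hy hvp (dist2w pp hvp hxp hyp)
      have n4 := one_sep hf hy hvq (dist2w qq hvq hxq hyq)
      rw [l0] at n0
      rw [l4] at n4
      omega

lemma deg3_leaf {v a b c : V} (ha : G.Adj v a) (hb' : G.Adj v b) (hc : G.Adj v c)
    (h1 : a ≠ b) (h2 : a ≠ c) (h3 : b ≠ c) :
    ∃ x, (x = a ∨ x = b ∨ x = c) ∧ ∀ y, G.Adj x y → y = v := by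
  have e1 := two_sep hf ha hb' (edgeAdj_same h1 hb'.ne)
  have e2 := two_sep hf ha hc (edgeAdj_same h2 hc.ne)
  have e3 := two_sep hf hb' hc (edgeAdj_same h3 hc.ne)
  have b1 := hb _ (G.mem_edgeSet.mpr ha)
  have b2 := hb _ (G.mem_edgeSet.mpr hb')
  have b3 := hb _ (G.mem_edgeSet.mpr hc)
  have hcase : (f s(v,a) = 2 ∧ f s(v,b) = 0 ∧ f s(v,c) = 4) ∨
      (f s(v,a) = 2 ∧ f s(v,c) = 0 ∧ f s(v,b) = 4) ∨
      (f s(v,b) = 2 ∧ f s(v,a) = 0 ∧ f s(v,c) = 4) ∨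
      (f s(v,b) = 2 ∧ f s(v,c) = 0 ∧ f s(v,a) = 4) ∨
      (f s(v,c) = 2 ∧ f s(v,a) = 0 ∧ f s(v,b) = 4) ∨
      (f s(v,c) = 2 ∧ f s(v,b) = 0 ∧ f s(v,a) = 4) := by omega
  rcases hcase with ⟨p1,p2,p3⟩|⟨p1,p2,p3⟩|⟨p1,p2,p3⟩|⟨p1,p2,p3⟩|⟨p1,p2,p3⟩|⟨p1,p2,p3⟩
  · exact ⟨a, Or.inl rfl, mid_leaf hf hb ha hb' hc h1 h2 h3 p1 p2 p3⟩
  · exact ⟨a, Or.inl rfl, mid_leaf hf hb ha hc hb' h2 h1 (Ne.symm h3) p1 p2 p3⟩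
  · exact ⟨b, Or.inr (Or.inl rfl), mid_leaf hf hb hb' ha hc (Ne.symm h1) h3 h2 p1 p2 p3⟩
  · exact ⟨b, Or.inr (Or.inl rfl), mid_leaf hf hb hb' hc ha h3 (Ne.symm h1) (Ne.symm h2) p1 p2 p3⟩
  · exact ⟨c, Or.inr (Or.inr rfl), mid_leaf hf hb hc ha hb' (Ne.symm h2) (Ne.symm h3) h1 p1 p2 p3⟩
  · exact ⟨c, Or.inr (Or.inr rfl), mid_leaf hf hb hc hb' ha (Ne.symm h3) (Ne.symm h2) (Ne.symm h1) p1 p2 p3⟩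

end Labeling



lemma path_getVert_inj {u w : V} (q : G.Walk u w) (hq : q.IsPath) :
    ∀ i j : ℕ, i ≤ q.length → j ≤ q.length → q.getVert i = q.getVert j → i = j := by
  induction q with
  | nil => intro i j hi hj _; simp only [length_nil, Nat.le_zero] at hi hj; omega
  | @cons a b c h t ih =>
    intro i j hi hj heq
    have hmem : ∀ k : ℕ, k ≤ t.length → t.getVert k ∈ t.support := by
      intro k hk
      exact mem_support_iff_exists_getVert.mpr ⟨k, rfl, hk⟩
    rw [cons_isPath_iff] at hq
    match i, j with
    | 0, 0 => rfl
    | 0, j+1 =>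
      rw [getVert_zero, getVert_cons_succ] at heq
      exact absurd (heq ▸ hmem j (by simpa using hj)) hq.2
    | i+1, 0 =>
      rw [getVert_zero, getVert_cons_succ] at heq
      exact absurd (heq ▸ hmem i (by simpa using hi)) hq.2
    | i+1, j+1 =>
      rw [getVert_cons_succ, getVert_cons_succ] at heq
      have := ih hq.1 i j (by simpa using hi) (by simpa using hj) heq
      omega

lemma suffix_walk {u w : V} (q : G.Walk u w) (hq : q.IsPath) (i : ℕ) :
    ∃ r : G.Walk (q.getVert i) w, r.IsPath ∧ (∀ e ∈ r.edges, e ∈ q.edges) ∧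
      (∀ x ∈ r.support, x ∈ q.support) ∧ (∀ m, r.getVert m = q.getVert (i + m)) ∧
      r.length = q.length - i := by
  induction q generalizing i with
  | nil =>
    rename_i u'
    exact ⟨(Walk.nil : G.Walk u' u'), IsPath.nil, fun e he => he, fun x hx => hx,
      fun m => rfl, by simp⟩
  | @cons a b c h t ih =>
    match i with
    | 0 =>
      refine ⟨(t.cons h).copy (getVert_zero _).symm rfl, by simpa [isPath_copy] using hq, ?_, ?_, ?_, ?_⟩
      · simp [edges_copy]
      · simp [support_copy]
      · intro m; simp [getVert_copy]
      · simp [length_copy]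
    | i+1 =>
      obtain ⟨r, hr1, hr2, hr3, hr4, hr5⟩ := ih hq.of_cons i
      refine ⟨r.copy (getVert_cons_succ _ _).symm rfl, by simpa [isPath_copy], ?_, ?_, ?_, ?_⟩
      · intro e he; rw [edges_copy] at he; exact List.mem_cons_of_mem _ (hr2 e he)
      · intro x hx; rw [support_copy] at hx; exact List.mem_cons_of_mem _ (hr3 x hx)
      · intro m
        rw [getVert_copy, show i+1+m = (i+m)+1 from by omega, getVert_cons_succ]
        exact hr4 m
      · simp [length_copy, hr5]

lemma prefix_walk {u w : V} (q : G.Walk u w) (hq : q.IsPath) :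
    ∀ j : ℕ, j ≤ q.length → ∃ r : G.Walk u (q.getVert j), r.IsPath ∧
      (∀ e ∈ r.edges, e ∈ q.edges) ∧ (∀ x ∈ r.support, x ∈ q.support) ∧ r.length = j := by
  induction q with
  | nil =>
    intro j hj
    simp only [length_nil, Nat.le_zero] at hj
    subst hj
    exact ⟨Walk.nil.copy rfl rfl, by simp [isPath_copy], by simp, by simp, by simp⟩
  | @cons a b c h t ih =>
    intro j hj
    match j with
    | 0 =>
      refine ⟨Walk.nil.copy rfl (getVert_zero _).symm, by simp [isPath_copy], by simp, ?_, by simp⟩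
      intro x hx; simp only [support_copy, support_nil, List.mem_singleton] at hx
      simp [hx]
    | j+1 =>
      rw [cons_isPath_iff] at hq
      obtain ⟨r, hr1, hr2, hr3, hr4⟩ := ih hq.1 j (by simpa using hj)
      refine ⟨(r.cons h).copy rfl (getVert_cons_succ _ _).symm, ?_, ?_, ?_, ?_⟩
      · rw [isPath_copy, cons_isPath_iff]
        exact ⟨hr1, fun hmem => hq.2 (hr3 _ hmem)⟩
      · intro e he
        rw [edges_copy, edges_cons, List.mem_cons] at he
        rcases he with he | he
        · exact he ▸ List.mem_cons_self
        · exact List.mem_cons_of_mem _ (hr2 e he)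
      · intro x hx
        rw [support_copy, support_cons, List.mem_cons] at hx
        rcases hx with hx | hx
        · simp [hx]
        · exact List.mem_cons_of_mem _ (hr3 x hx)
      · simp [length_copy, hr4]

lemma segment_walk {u w : V} (q : G.Walk u w) (hq : q.IsPath) {i j : ℕ} (hij : i ≤ j)
    (hj : j ≤ q.length) :
    ∃ r : G.Walk (q.getVert i) (q.getVert j), r.IsPath ∧ (∀ e ∈ r.edges, e ∈ q.edges) ∧
      (∀ x ∈ r.support, x ∈ q.support) ∧ r.length = j - i := by
  obtain ⟨r1, h1, h2, h3, h4, h5⟩ := suffix_walk q hq i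
  obtain ⟨r2, g1, g2, g3, g4⟩ := prefix_walk r1 h1 (j - i) (by omega)
  have : r1.getVert (j - i) = q.getVert j := by rw [h4]; congr 1; omega
  refine ⟨r2.copy rfl this, by simp [isPath_copy, g1], ?_, ?_, by simp [length_copy, g4]⟩
  · intro e he
    rw [edges_copy] at he
    exact h2 e (g2 e he)
  · intro x hx
    rw [support_copy] at hx
    exact h3 x (g3 x hx)

lemma edges_getVert {u w : V} (q : G.Walk u w) {e : Sym2 V} (he : e ∈ q.edges) :
    ∃ k, k < q.length ∧ e = s(q.getVert k, q.getVert (k+1)) := by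
  induction q with
  | nil => simp at he
  | @cons a b c h t ih =>
    rw [edges_cons, List.mem_cons] at he
    rcases he with he | he
    · exact ⟨0, by simp, by simpa [getVert_zero] using he⟩
    · obtain ⟨k, hk, hke⟩ := ih he
      exact ⟨k+1, by simpa using hk, by simpa [getVert_cons_succ] using hke⟩

lemma cycle_of_adj {u w : V} (q : G.Walk u w) (hq : q.IsPath) {i j : ℕ}
    (hij : i + 2 ≤ j) (hj : j ≤ q.length)
    (hadj : G.Adj (q.getVert i) (q.getVert j)) : ¬ G.IsAcyclic := by
  obtain ⟨r, hr1, hr2, hr3, hr4⟩ := segment_walk q hq (by omega : i ≤ j) hj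
  intro hA
  refine hA (Walk.cons hadj r.reverse) ?_
  rw [cons_isCycle_iff]
  refine ⟨hr1.reverse, ?_⟩
  rw [edges_reverse, List.mem_reverse]
  intro hmem
  obtain ⟨k, hk, hke⟩ := edges_getVert q (hr2 _ hmem)
  rw [Sym2.eq_iff] at hke
  have hi : i ≤ q.length := by omega
  rcases hke with ⟨e1, e2⟩ | ⟨e1, e2⟩
  · have := path_getVert_inj q hq i k hi (by omega) e1
    have := path_getVert_inj q hq j (k+1) hj (by omega) e2
    omega
  · have := path_getVert_inj q hq i (k+1) hi (by omega) e1
    have := path_getVert_inj q hq j k hj (by omega) e2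
    omega

lemma reach {S : Set V}
    (hleaf : ∀ x ∉ S, ∀ z ∈ S, G.Adj x z → ∀ y, G.Adj x y → y = z) :
    ∀ {x y : V} (r : G.Walk x y), r.IsPath → y ∈ S → x ∉ S → ∃ z ∈ S, G.Adj x z := by
  intro x y r
  induction r with
  | nil => intro _ hy hx; exact absurd hy hx
  | @cons a b c h t ih =>
    intro hr hy hx
    by_cases hbS : b ∈ S
    · exact ⟨b, hbS, h⟩
    · obtain ⟨z, hzS, hbz⟩ := ih hr.of_cons hy hbS
      have := hleaf b hbS z hzS hbz a h.symm
      exact absurd (this ▸ hx) (fun h' => h' hzS)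

lemma ext1_lemma {u w : V} (q : G.Walk u w) (hq : q.IsPath)
    (hlong : ∀ (a b : V) (r : G.Walk a b), r.IsPath → r.length ≤ q.length)
    {x y : V} (hx : x ∉ q.support) (hy : y ∉ q.support) (hxy : x ≠ y)
    (h1 : G.Adj x (q.getVert 1)) (h2 : G.Adj x y) (hn : 1 ≤ q.length) : False := by
  obtain ⟨r, hr1, hr2, hr3, hr4, hr5⟩ := suffix_walk q hq 1
  have hxr : x ∉ r.support := fun h => hx (hr3 _ h)
  have hp2 : (Walk.cons h1 r).IsPath := (cons_isPath_iff _ _).2 ⟨hr1, hxr⟩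
  have hyr : y ∉ (Walk.cons h1 r).support := by
    rw [support_cons, List.mem_cons]
    rintro (rfl | hmem)
    · exact hxy rfl
    · exact hy (hr3 _ hmem)
  have hp3 : (Walk.cons h2.symm (Walk.cons h1 r)).IsPath := (cons_isPath_iff _ _).2 ⟨hp2, hyr⟩
  have := hlong _ _ _ hp3
  rw [length_cons, length_cons] at this
  omega

theorem tree_case [Fintype V] {f : Sym2 V → ℕ}
    (hf : IsDistEdgeLabeling G f) (hb : ∀ e ∈ G.edgeSet, f e ≤ 4)
    (hc : G.Connected) (hA : G.IsAcyclic) :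
    ∃ (n : ℕ) (p : Fin (n + 1) → V), IsGenPathCore G n p := by
  classical
  obtain ⟨v0⟩ := hc.nonempty
  set S : Set ℕ := {k | ∃ (a b : V) (r : G.Walk a b), r.IsPath ∧ r.length = k} with hS
  have hS0 : (0 : ℕ) ∈ S := ⟨v0, v0, Walk.nil, IsPath.nil, rfl⟩
  have hbdd : BddAbove S := by
    refine ⟨Fintype.card V, ?_⟩
    rintro k ⟨a, b, r, hr, rfl⟩
    exact hr.length_lt.le
  obtain ⟨n, hnS, hmax⟩ : ∃ n, n ∈ S ∧ ∀ k ∈ S, k ≤ n :=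
    ⟨sSup S, Nat.sSup_mem ⟨0, hS0⟩ hbdd, fun k hk => le_csSup hbdd hk⟩
  obtain ⟨u, w, q, hq, hlen⟩ := hnS
  have hlong : ∀ (a b : V) (r : G.Walk a b), r.IsPath → r.length ≤ n :=
    fun a b r hr => hmax _ ⟨a, b, r, hr, rfl⟩
  have hlong' : ∀ (a b : V) (r : G.Walk a b), r.IsPath → r.length ≤ q.length := by
    rw [hlen]; exact hlong
  have hgv_mem : ∀ k, k ≤ n → q.getVert k ∈ q.support := fun k hk =>
    mem_support_iff_exists_getVert.mpr ⟨k, rfl, by omega⟩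
  have hinj : ∀ i j, i ≤ n → j ≤ n → q.getVert i = q.getVert j → i = j := fun i j hi hj =>
    path_getVert_inj q hq i j (by omega) (by omega)
  have hadjc : ∀ k, k < n → G.Adj (q.getVert k) (q.getVert (k+1)) := fun k hk =>
    q.adj_getVert_succ (by omega)
  -- endpoints cannot have pendant neighbors
  have end0 : ∀ x, x ∉ q.support → ¬ G.Adj x (q.getVert 0) := by
    intro x hx hadj
    rw [getVert_zero] at hadj
    have := hlong _ _ (Walk.cons hadj q) ((cons_isPath_iff _ _).2 ⟨hq, hx⟩)
    rw [length_cons] at this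
    omega
  have endn : ∀ x, x ∉ q.support → ¬ G.Adj x (q.getVert n) := by
    intro x hx hadj
    have hgn : q.getVert n = w := by rw [← hlen]; exact getVert_length q
    rw [hgn] at hadj
    have hxr : x ∉ q.reverse.support := by rwa [support_reverse, List.mem_reverse]
    have := hlong _ _ (Walk.cons hadj q.reverse) ((cons_isPath_iff _ _).2 ⟨hq.reverse, hxr⟩)
    rw [length_cons, length_reverse] at this
    omega
  -- every off-path vertex adjacent to the path is a pendant leaf
  have offleaf : ∀ x, x ∉ q.support → ∀ i, i ≤ n → G.Adj x (q.getVert i) →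
      ∀ y, G.Adj x y → y = q.getVert i := by
    intro x hx i hi hxi y hxy
    by_contra hyne
    by_cases hys : y ∈ q.support
    · -- y on the path: two distinct paths from x to y, contradiction with acyclicity
      obtain ⟨j, hj1, hj2⟩ := mem_support_iff_exists_getVert.mp hys
      have hji : j ≠ i := by
        intro hcon
        exact hyne (by rw [← hj1, hcon])
      have hseg : ∃ r : G.Walk (q.getVert i) y, r.IsPath ∧ (∀ z ∈ r.support, z ∈ q.support) ∧
          1 ≤ r.length := by
        rcases lt_or_gt_of_ne hji with hlt | hgt
        · obtain ⟨r, h1, h2, h3, h4⟩ := segment_walk q hq hlt.le (by omega)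
          refine ⟨r.reverse.copy rfl hj1, ?_, ?_, ?_⟩
          · rw [isPath_copy]; exact h1.reverse
          · intro z hz
            rw [support_copy, support_reverse, List.mem_reverse] at hz
            exact h3 _ hz
          · rw [length_copy, length_reverse]; omega
        · obtain ⟨r, h1, h2, h3, h4⟩ := segment_walk q hq hgt.le (by omega)
          refine ⟨r.copy rfl hj1, ?_, ?_, ?_⟩
          · rw [isPath_copy]; exact h1
          · intro z hz
            rw [support_copy] at hz
            exact h3 _ hz
          · rw [length_copy]; omega
      obtain ⟨r, hr1, hr2, hr3⟩ := hseg
      have hxr : x ∉ r.support := fun hmem => hx (hr2 _ hmem)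
      have hPeq := isAcyclic_iff_path_unique.mp hA
        (⟨Walk.cons hxy Walk.nil, by
          rw [cons_isPath_iff]
          exact ⟨IsPath.nil, by simpa using hxy.ne⟩⟩ : G.Path x y)
        (⟨Walk.cons hxi r, (cons_isPath_iff _ _).2 ⟨hr1, hxr⟩⟩ : G.Path x y)
      have hweq : Walk.cons hxy Walk.nil = Walk.cons hxi r := congrArg Subtype.val hPeq
      have := congrArg Walk.length hweq
      simp only [length_cons, length_nil] at this
      omega
    · -- y off the path
      by_cases hi0 : i = 0
      · exact end0 x hx (hi0 ▸ hxi)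
      · by_cases hin : i = n
        · exact endn x hx (hin ▸ hxi)
        · by_cases hi1 : i = 1
          · subst hi1
            exact ext1_lemma q hq hlong' hx hys hxy.ne hxi hxy (by omega)
          · by_cases hin1 : i = n - 1
            · -- use the reversed path
              have hrl : ∀ (a b : V) (r : G.Walk a b), r.IsPath → r.length ≤ q.reverse.length := by
                rw [length_reverse]; exact hlong'
              have hxr : x ∉ q.reverse.support := by rwa [support_reverse, List.mem_reverse]
              have hyr : y ∉ q.reverse.support := by rwa [support_reverse, List.mem_reverse]
              have hg1 : q.reverse.getVert 1 = q.getVert i := by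
                rw [getVert_reverse, hlen, hin1]
              exact ext1_lemma q.reverse hq.reverse hrl hxr hyr hxy.ne (hg1 ▸ hxi) hxy
                (by rw [length_reverse]; omega)
            · -- interior: degree-3 vertex with no leaf neighbor
              have hi2 : 2 ≤ i := by omega
              have hin2 : i ≤ n - 2 := by omega
              have ha1 : G.Adj (q.getVert i) (q.getVert (i-1)) := by
                have := hadjc (i-1) (by omega)
                rw [show i - 1 + 1 = i from by omega] at this
                exact this.symm
              have ha2 : G.Adj (q.getVert i) (q.getVert (i+1)) := hadjc i (by omega)
              have hd1 : q.getVert (i-1) ≠ q.getVert (i+1) := by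
                intro hcon
                have := hinj _ _ (by omega) (by omega) hcon
                omega
              have hd2 : q.getVert (i-1) ≠ x := fun hcon => hx (hcon ▸ hgv_mem (i-1) (by omega))
              have hd3 : q.getVert (i+1) ≠ x := fun hcon => hx (hcon ▸ hgv_mem (i+1) (by omega))
              obtain ⟨z, hz, hleafz⟩ := deg3_leaf hf hb ha1 ha2 hxi.symm hd1 hd2 hd3
              rcases hz with rfl | rfl | rfl
              · have hadj : G.Adj (q.getVert (i-1)) (q.getVert (i-2)) := by
                  have := hadjc (i-2) (by omega)
                  rw [show i - 2 + 1 = i - 1 from by omega] at this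
                  exact this.symm
                have := hleafz _ hadj
                have := hinj _ _ (by omega) (by omega) this
                omega
              · have hadj : G.Adj (q.getVert (i+1)) (q.getVert (i+2)) := by
                  have := hadjc (i+1) (by omega)
                  exact this
                have := hleafz _ hadj
                have := hinj _ _ (by omega) (by omega) this
                omega
              · exact hyne (hleafz y hxy)
  -- the core path
  refine ⟨n, fun i => q.getVert i.val, ?_, ?_, ?_, ?_⟩
  · intro i j hij
    exact Fin.ext (hinj _ _ (by omega) (by omega) hij)
  · intro i j
    constructor
    · intro hadj
      by_contra hcon
      push_neg at hcon
      have hne : i.val ≠ j.val := fun hcon' =>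
        hadj.ne (congrArg (fun k : Fin (n+1) => q.getVert k.val) (Fin.ext hcon'))
      rcases lt_or_gt_of_ne hne with hlt | hgt
      · exact cycle_of_adj q hq (by omega : i.val + 2 ≤ j.val) (by omega) hadj hA
      · exact cycle_of_adj q hq (by omega : j.val + 2 ≤ i.val) (by omega) hadj.symm hA
    · rintro (h | h)
      · have := hadjc i.val (by omega)
        rwa [h] at this
      · have := hadjc j.val (by omega)
        rw [h] at this
        exact this.symm
  · intro v hv
    have hrange : ∀ z, z ∈ Set.range (fun i : Fin (n+1) => q.getVert i.val) ↔ z ∈ q.support := by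
      intro z
      constructor
      · rintro ⟨i, rfl⟩
        exact hgv_mem i.val (by omega)
      · intro hz
        obtain ⟨k, hk1, hk2⟩ := mem_support_iff_exists_getVert.mp hz
        exact ⟨⟨k, by omega⟩, hk1⟩
    have hvs : v ∉ q.support := fun hmem => hv ((hrange v).mpr hmem)
    have hleaf' : ∀ x ∉ {z | z ∈ q.support}, ∀ z ∈ {z | z ∈ q.support}, G.Adj x z →
        ∀ y, G.Adj x y → y = z := by
      intro x hx z hz hxz y hxy
      obtain ⟨k, hk1, hk2⟩ := mem_support_iff_exists_getVert.mp hz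
      rw [← hk1] at hxz ⊢
      exact offleaf x hx k (by omega) hxz y hxy
    obtain ⟨r0⟩ := hc.preconnected v u
    have hus : u ∈ {z | z ∈ q.support} := q.start_mem_support
    obtain ⟨z, hzS, hvz⟩ := reach hleaf' r0.toPath.1 r0.toPath.2 hus hvs
    obtain ⟨k, hk1, hk2⟩ := mem_support_iff_exists_getVert.mp hzS
    refine ⟨⟨z, hvz, fun y hy => ?_⟩, ⟨⟨k, by omega⟩, ?_⟩⟩
    · rw [← hk1] at hvz ⊢
      exact offleaf v hvs k (by omega) hvz y hy
    · show G.Adj v (q.getVert k)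
      rw [hk1]
      exact hvz
  · intro i x hx y hy
    simp only [Set.mem_setOf_eq] at hx hy
    obtain ⟨hx1, hx2⟩ := hx
    obtain ⟨hy1, hy2⟩ := hy
    have hxs : x ∉ q.support := by
      intro hmem
      obtain ⟨k, hk1, hk2⟩ := mem_support_iff_exists_getVert.mp hmem
      exact hx1 ⟨⟨k, by omega⟩, hk1⟩
    have hys : y ∉ q.support := by
      intro hmem
      obtain ⟨k, hk1, hk2⟩ := mem_support_iff_exists_getVert.mp hmem
      exact hy1 ⟨⟨k, by omega⟩, hk1⟩
    by_contra hne
    by_cases hi0 : i.val = 0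
    · exact end0 x hxs (hi0 ▸ hx2)
    · by_cases hin : i.val = n
      · exact endn x hxs (hin ▸ hx2)
      · have ha1 : G.Adj (q.getVert i.val) (q.getVert (i.val - 1)) := by
          have := hadjc (i.val - 1) (by omega)
          rw [show i.val - 1 + 1 = i.val from by omega] at this
          exact this.symm
        have ha2 : G.Adj (q.getVert i.val) (q.getVert (i.val + 1)) := hadjc i.val (by omega)
        have hd1 : q.getVert (i.val - 1) ≠ q.getVert (i.val + 1) := by
          intro hcon
          have := hinj _ _ (by omega) (by omega) hcon
          omega
        have hd2 : q.getVert (i.val - 1) ≠ x := fun hcon => hxs (hcon ▸ hgv_mem _ (by omega))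
        have hd3 : q.getVert (i.val - 1) ≠ y := fun hcon => hys (hcon ▸ hgv_mem _ (by omega))
        have hd4 : q.getVert (i.val + 1) ≠ x := fun hcon => hxs (hcon ▸ hgv_mem _ (by omega))
        have hd5 : q.getVert (i.val + 1) ≠ y := fun hcon => hys (hcon ▸ hgv_mem _ (by omega))
        exact no4 hf hb ha1 ha2 hx2.symm hy2.symm hd1 hd2 hd3 hd4 hd5 hne

theorem cycle_case {f : Sym2 V → ℕ}
    (hf : IsDistEdgeLabeling G f) (hb : ∀ e ∈ G.edgeSet, f e ≤ 4)
    (hc : G.Connected) {x0 : V} (c : G.Walk x0 x0) (hcyc : c.IsCycle) :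
    ∃ (n : ℕ) (p : Fin (n + 3) → V), IsGenCycleCore G n p := by
  classical
  have hm3 : 3 ≤ c.length := hcyc.three_le_length
  obtain ⟨n, hn⟩ : ∃ n, c.length = n + 3 := ⟨c.length - 3, by omega⟩
  -- decompose the cycle
  obtain ⟨b0, h0, t, rfl⟩ : ∃ (b0 : V) (h0 : G.Adj x0 b0) (t : G.Walk b0 x0),
      c = Walk.cons h0 t := by
    cases c with
    | nil => exact absurd rfl hcyc.ne_nil
    | cons h t => exact ⟨_, h, t, rfl⟩
  rw [cons_isCycle_iff] at hcyc
  obtain ⟨htp, hte⟩ := hcyc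
  set c := Walk.cons h0 t with hcdef
  have hclen : c.length = t.length + 1 := length_cons _ _
  -- injectivity of getVert on [0, length)
  have cinj : ∀ i j, i < c.length → j < c.length → c.getVert i = c.getVert j → i = j := by
    intro i j hi hj heq
    have hgt : ∀ k, c.getVert (k+1) = t.getVert k := fun k => getVert_cons_succ t h0
    have hx0 : c.getVert 0 = x0 := getVert_zero c
    have htl : t.getVert t.length = x0 := getVert_length t
    match i, j with
    | 0, 0 => rfl
    | 0, j+1 =>
      rw [hx0, hgt j] at heq
      have := path_getVert_inj t htp j t.length (by omega) le_rfl (by rw [← heq, htl])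
      omega
    | i+1, 0 =>
      rw [hx0, hgt i] at heq
      have := path_getVert_inj t htp i t.length (by omega) le_rfl (by rw [heq, htl])
      omega
    | i+1, j+1 =>
      rw [hgt i, hgt j] at heq
      have := path_getVert_inj t htp i j (by omega) (by omega) heq
      omega
  have cadj : ∀ k, k < c.length → G.Adj (c.getVert k) (c.getVert (k+1)) := fun k hk =>
    c.adj_getVert_succ hk
  have cgv : c.getVert c.length = c.getVert 0 := by
    rw [getVert_length, getVert_zero]
  -- the core map
  set p : Fin (n+3) → V := fun i => c.getVert i.val with hpdef
  have hisLt : ∀ i : Fin (n+3), i.val < c.length := fun i => by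
    have := i.isLt; omega
  have hpinj : Function.Injective p := fun i j h =>
    Fin.ext (cinj _ _ (hisLt i) (hisLt j) h)
  have hval1 : ∀ i : Fin (n+3), (i+1).val = (i.val + 1) % (n+3) := by
    intro i
    rw [Fin.add_def, Fin.val_one]
  have hadjp : ∀ i : Fin (n+3), G.Adj (p i) (p (i+1)) := by
    intro i
    show G.Adj (c.getVert i.val) (c.getVert (i+1).val)
    rw [hval1]
    by_cases hiv : i.val + 1 < n + 3
    · rw [Nat.mod_eq_of_lt hiv]
      exact cadj i.val (hisLt i)
    · have hie : i.val + 1 = n + 3 := by have := i.isLt; omega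
      rw [hie, Nat.mod_self]
      have := cadj i.val (hisLt i)
      rw [show i.val + 1 = c.length from by omega, cgv] at this
      exact this
  have hadjprev : ∀ i : Fin (n+3), G.Adj (p i) (p (i-1)) := by
    intro i
    have := hadjp (i-1)
    rw [sub_add_cancel] at this
    exact this.symm
  -- Fin facts
  have hfin2 : ∀ i : Fin (n+3), i + 1 ≠ i - 1 := by
    intro i h
    have h2 : i + 1 + 1 = i := by rw [h, sub_add_cancel]
    have h3 : ((i + 1 + 1 : Fin (n+3))).val = i.val := congrArg Fin.val h2
    rw [hval1, hval1] at h3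
    have hlt := i.isLt
    rcases Nat.lt_or_ge (i.val + 1) (n+3) with hcase | hcase
    · rw [Nat.mod_eq_of_lt hcase] at h3
      rcases Nat.lt_or_ge (i.val + 2) (n+3) with hcase2 | hcase2
      · rw [Nat.mod_eq_of_lt hcase2] at h3; omega
      · have : i.val + 1 + 1 = n + 3 := by omega
        rw [this, Nat.mod_self] at h3
        omega
    · have h4 : i.val + 1 = n + 3 := by omega
      rw [h4, Nat.mod_self] at h3
      simp only [Nat.zero_add] at h3
      rw [Nat.mod_eq_of_lt (by omega)] at h3
      omega
  have hd_pm : ∀ i : Fin (n+3), p (i+1) ≠ p (i-1) := fun i h => hfin2 i (hpinj h)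
  -- no core vertex is a leaf
  have hcore_notleaf : ∀ (k : Fin (n+3)) (v : V), (∀ y, G.Adj (p k) y → y = v) → False := by
    intro k v hl
    have h1 := hl _ (hadjp k)
    have h2 := hl _ (hadjprev k)
    exact hd_pm k (by rw [h1, h2])
  -- off-core vertices are leaves
  have offleafC : ∀ x, x ∉ Set.range p → ∀ i, G.Adj x (p i) → ∀ y, G.Adj x y → y = p i := by
    intro x hx i hxi y hxy
    have hd1 : p (i+1) ≠ p (i-1) := hd_pm i
    have hd2 : p (i+1) ≠ x := fun h => hx ⟨i+1, h⟩
    have hd3 : p (i-1) ≠ x := fun h => hx ⟨i-1, h⟩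
    obtain ⟨z, hz, hleafz⟩ := deg3_leaf hf hb (hadjp i) (hadjprev i) hxi.symm hd1 hd2 hd3
    rcases hz with rfl | rfl | rfl
    · exact absurd hleafz (fun h => hcore_notleaf (i+1) (p i) h)
    · exact absurd hleafz (fun h => hcore_notleaf (i-1) (p i) h)
    · exact hleafz y hxy
  refine ⟨n, p, hpinj, ?_, ?_, ?_⟩
  · -- adjacency characterization
    intro i j
    constructor
    · intro hadj
      by_contra hcon
      push_neg at hcon
      obtain ⟨hc1, hc2⟩ := hcon
      have hd2 : p (i+1) ≠ p j := fun h => hc1 (hpinj h).symm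
      have hd3 : p (i-1) ≠ p j := by
        intro h
        exact hc2 (by rw [← (hpinj h), sub_add_cancel])
      have hd1 : p (i+1) ≠ p (i-1) := hd_pm i
      obtain ⟨z, hz, hleafz⟩ := deg3_leaf hf hb (hadjp i) (hadjprev i) hadj hd1 hd2 hd3
      rcases hz with rfl | rfl | rfl
      · exact hcore_notleaf (i+1) (p i) hleafz
      · exact hcore_notleaf (i-1) (p i) hleafz
      · exact hcore_notleaf j (p i) hleafz
    · rintro (rfl | rfl)
      · exact hadjp i
      · exact (hadjp j).symm
  · -- off-core vertices
    intro v hv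
    have hx0r : x0 ∈ Set.range p := ⟨⟨0, by omega⟩, getVert_zero c⟩
    have hleaf' : ∀ x ∉ Set.range p, ∀ z ∈ Set.range p, G.Adj x z → ∀ y, G.Adj x y → y = z := by
      rintro x hx z ⟨i, rfl⟩ hxz y hxy
      exact offleafC x hx i hxz y hxy
    obtain ⟨r0⟩ := hc.preconnected v x0
    obtain ⟨z, hzr, hvz⟩ := reach hleaf' r0.toPath.1 r0.toPath.2 hx0r hv
    obtain ⟨i, rfl⟩ := hzr
    exact ⟨⟨p i, hvz, fun y hy => offleafC v hv i hvz y hy⟩, ⟨i, hvz⟩⟩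
  · -- pendant subsingleton
    intro i x hx y hy
    obtain ⟨hx1, hx2⟩ := hx
    obtain ⟨hy1, hy2⟩ := hy
    by_contra hne
    have hd1 : p (i+1) ≠ p (i-1) := hd_pm i
    have hd2 : p (i+1) ≠ x := fun h => hx1 ⟨i+1, h⟩
    have hd3 : p (i+1) ≠ y := fun h => hy1 ⟨i+1, h⟩
    have hd4 : p (i-1) ≠ x := fun h => hx1 ⟨i-1, h⟩
    have hd5 : p (i-1) ≠ y := fun h => hy1 ⟨i-1, h⟩
    exact no4 hf hb (hadjp i) (hadjprev i) hx2.symm hy2.symm hd1 hd2 hd3 hd4 hd5 hne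


lemma labelings_nonempty {V : Type*} [Fintype V] (G : SimpleGraph V) :
    {l | ∃ f : Sym2 V → ℕ, IsDistEdgeLabeling G f ∧ ∀ e ∈ G.edgeSet, f e ≤ l}.Nonempty := by
  classical
  let κ := Fintype.equivFin (Sym2 V)
  refine ⟨5 * Fintype.card (Sym2 V), fun e => 5 * (κ e).val, ⟨?_, ?_⟩, ?_⟩
  · rintro e he e' he' ⟨hne, -⟩
    have hv : (κ e).val ≠ (κ e').val := fun h => hne (κ.injective (Fin.ext h))
    show (2:ℤ) ≤ |((5 * (κ e).val : ℕ) : ℤ) - ((5 * (κ e').val : ℕ) : ℤ)|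
    rw [le_abs]
    omega
  · rintro e he e' he' ⟨-, hne, -⟩
    have hv : (κ e).val ≠ (κ e').val := fun h => hne (κ.injective (Fin.ext h))
    show (1:ℤ) ≤ |((5 * (κ e).val : ℕ) : ℤ) - ((5 * (κ e').val : ℕ) : ℤ)|
    rw [le_abs]
    omega
  · intro e he
    show 5 * (κ e).val ≤ 5 * Fintype.card (Sym2 V)
    have := (κ e).isLt
    omega

end Aux

theorem stmt7 {V : Type*} [Fintype V] (G : SimpleGraph V) (hc : G.Connected)
    (h : lambdaE G ≤ 4) :
    (∃ (n : ℕ) (p : Fin (n + 1) → V), IsGenPathCore G n p) ∨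
    (∃ (n : ℕ) (p : Fin (n + 3) → V), IsGenCycleCore G n p) := by
  classical
  obtain ⟨f, hf, hfb⟩ := Nat.sInf_mem (Aux.labelings_nonempty G)
  have hb : ∀ e ∈ G.edgeSet, f e ≤ 4 := fun e he => le_trans (hfb e he) h
  by_cases hA : G.IsAcyclic
  · exact Or.inl (Aux.tree_case hf hb hc hA)
  · simp only [SimpleGraph.IsAcyclic, not_forall, not_not] at hA
    obtain ⟨v, c, hcyc⟩ := hA
    exact Or.inr (Aux.cycle_case hf hb hc c hcyc)
end

section
/- Consider finite sequences of labels from {0,1,2,3,4} assigned to consecutive edges of a path, where a valid labeling requires consecutive labels to differ by at least 2 and labels at distance two in the sequence to differ by at least 1. There is a valid sequence of length d whose first edge and last edge are each incident to a hairy-vertex pattern (i.e., the sequence can be preceded and followed by the label pattern forced by a degree-3 vertex whose pendant edge gets label 2, so the sequence must begin with 0,3,1,4 and end with 4,1,3,0 or the respective 4-inversions) if and only if d = 4 or d ≥ 8. -/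
open SimpleGraph

/-- The forced labeling pattern `0,3,1,4` around a hairy vertex. -/
def patA : ℕ → ℕ := fun i => [0, 3, 1, 4].getD i 0

/-- Its 4-inversion `4,1,3,0`. -/
def patB : ℕ → ℕ := fun i => [4, 1, 3, 0].getD i 0

/-- Periodic extension of `patA`. -/
def gA : ℕ → ℕ := fun i => patA (i % 4)

/-- Sequence for `d ≡ 1 [MOD 4]`, `d ≥ 9`. -/
def gOne : ℕ → ℕ := fun i =>
  if i < 9 then [0, 3, 1, 4, 0, 3, 1, 4, 2].getD i 0 else patA ((i - 9) % 4)

/-- Sequence for `d ≡ 2 [MOD 4]`, `d ≥ 10`. -/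
def gTwo : ℕ → ℕ := fun i =>
  if i < 10 then [0, 3, 1, 4, 0, 3, 1, 4, 0, 2].getD i 0 else patB ((i - 10) % 4)

/-- Sequence for `d ≡ 3 [MOD 4]`, `d ≥ 11`. -/
def gThree : ℕ → ℕ := fun i =>
  if i < 11 then [0, 3, 1, 4, 0, 3, 1, 4, 0, 2, 4].getD i 0 else patA ((i - 11) % 4)

lemma patA_mod_le (n : ℕ) : patA (n % 4) ≤ 4 := by
  have h4 : n % 4 = 0 ∨ n % 4 = 1 ∨ n % 4 = 2 ∨ n % 4 = 3 := by omega
  rcases h4 with h | h | h | h <;> rw [h] <;> decide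

lemma patB_mod_le (n : ℕ) : patB (n % 4) ≤ 4 := by
  have h4 : n % 4 = 0 ∨ n % 4 = 1 ∨ n % 4 = 2 ∨ n % 4 = 3 := by omega
  rcases h4 with h | h | h | h <;> rw [h] <;> decide

lemma patA_adj (n : ℕ) : 2 ≤ |(patA (n % 4) : ℤ) - (patA ((n + 1) % 4) : ℤ)| := by
  rw [Nat.add_mod]
  have h4 : n % 4 = 0 ∨ n % 4 = 1 ∨ n % 4 = 2 ∨ n % 4 = 3 := by omega
  rcases h4 with h | h | h | h <;> rw [h] <;> decide

lemma patB_adj (n : ℕ) : 2 ≤ |(patB (n % 4) : ℤ) - (patB ((n + 1) % 4) : ℤ)| := by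
  rw [Nat.add_mod]
  have h4 : n % 4 = 0 ∨ n % 4 = 1 ∨ n % 4 = 2 ∨ n % 4 = 3 := by omega
  rcases h4 with h | h | h | h <;> rw [h] <;> decide

lemma patA_ne2 (n : ℕ) : patA (n % 4) ≠ patA ((n + 2) % 4) := by
  rw [Nat.add_mod]
  have h4 : n % 4 = 0 ∨ n % 4 = 1 ∨ n % 4 = 2 ∨ n % 4 = 3 := by omega
  rcases h4 with h | h | h | h <;> rw [h] <;> decide

lemma patB_ne2 (n : ℕ) : patB (n % 4) ≠ patB ((n + 2) % 4) := by
  rw [Nat.add_mod]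
  have h4 : n % 4 = 0 ∨ n % 4 = 1 ∨ n % 4 = 2 ∨ n % 4 = 3 := by omega
  rcases h4 with h | h | h | h <;> rw [h] <;> decide

lemma gOne_tail (i : ℕ) (h : 9 ≤ i) : gOne i = patA ((i - 9) % 4) := by
  simp [gOne, Nat.not_lt.2 h]

lemma gTwo_tail (i : ℕ) (h : 10 ≤ i) : gTwo i = patB ((i - 10) % 4) := by
  simp [gTwo, Nat.not_lt.2 h]

lemma gThree_tail (i : ℕ) (h : 11 ≤ i) : gThree i = patA ((i - 11) % 4) := by
  simp [gThree, Nat.not_lt.2 h]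

lemma gA_le (i : ℕ) : gA i ≤ 4 := patA_mod_le i

lemma gA_adj (i : ℕ) : 2 ≤ |(gA i : ℤ) - (gA (i + 1) : ℤ)| := patA_adj i

lemma gA_ne2 (i : ℕ) : gA i ≠ gA (i + 2) := patA_ne2 i

lemma gOne_le (i : ℕ) : gOne i ≤ 4 := by
  rcases Nat.lt_or_ge i 9 with h | h
  · interval_cases i <;> decide
  · rw [gOne_tail i h]; exact patA_mod_le _

lemma gOne_adj (i : ℕ) : 2 ≤ |(gOne i : ℤ) - (gOne (i + 1) : ℤ)| := by
  rcases Nat.lt_or_ge i 9 with h | h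
  · interval_cases i <;> decide
  · rw [gOne_tail i h, gOne_tail (i + 1) (by omega), show i + 1 - 9 = (i - 9) + 1 by omega]
    exact patA_adj _

lemma gOne_ne2 (i : ℕ) : gOne i ≠ gOne (i + 2) := by
  rcases Nat.lt_or_ge i 9 with h | h
  · interval_cases i <;> decide
  · rw [gOne_tail i h, gOne_tail (i + 2) (by omega), show i + 2 - 9 = (i - 9) + 2 by omega]
    exact patA_ne2 _

lemma gTwo_le (i : ℕ) : gTwo i ≤ 4 := by
  rcases Nat.lt_or_ge i 10 with h | h
  · interval_cases i <;> decide
  · rw [gTwo_tail i h]; exact patB_mod_le _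

lemma gTwo_adj (i : ℕ) : 2 ≤ |(gTwo i : ℤ) - (gTwo (i + 1) : ℤ)| := by
  rcases Nat.lt_or_ge i 10 with h | h
  · interval_cases i <;> decide
  · rw [gTwo_tail i h, gTwo_tail (i + 1) (by omega), show i + 1 - 10 = (i - 10) + 1 by omega]
    exact patB_adj _

lemma gTwo_ne2 (i : ℕ) : gTwo i ≠ gTwo (i + 2) := by
  rcases Nat.lt_or_ge i 10 with h | h
  · interval_cases i <;> decide
  · rw [gTwo_tail i h, gTwo_tail (i + 2) (by omega), show i + 2 - 10 = (i - 10) + 2 by omega]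
    exact patB_ne2 _

lemma gThree_le (i : ℕ) : gThree i ≤ 4 := by
  rcases Nat.lt_or_ge i 11 with h | h
  · interval_cases i <;> decide
  · rw [gThree_tail i h]; exact patA_mod_le _

lemma gThree_adj (i : ℕ) : 2 ≤ |(gThree i : ℤ) - (gThree (i + 1) : ℤ)| := by
  rcases Nat.lt_or_ge i 11 with h | h
  · interval_cases i <;> decide
  · rw [gThree_tail i h, gThree_tail (i + 1) (by omega), show i + 1 - 11 = (i - 11) + 1 by omega]
    exact patA_adj _

lemma gThree_ne2 (i : ℕ) : gThree i ≠ gThree (i + 2) := by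
  rcases Nat.lt_or_ge i 11 with h | h
  · interval_cases i <;> decide
  · rw [gThree_tail i h, gThree_tail (i + 2) (by omega), show i + 2 - 11 = (i - 11) + 2 by omega]
    exact patA_ne2 _

/-- A valid labeled sequence of `d` edges between two hairy vertices, modeled together with
the four forced edges on each side (positions `0..3` and `4..7` carry the pattern of the
first hairy vertex, positions `d..d+3` and `d+4..d+7` the pattern of the second one). -/
theorem stmt9 (d : ℕ) (hd : 1 ≤ d) :
    (∃ g : ℕ → ℕ,
      (∀ i, i < d + 8 → g i ≤ 4) ∧
      (∀ i, i + 1 < d + 8 → 2 ≤ |(g i : ℤ) - (g (i + 1) : ℤ)|) ∧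
      (∀ i, i + 2 < d + 8 → g i ≠ g (i + 2)) ∧
      (∃ p, (p = patA ∨ p = patB) ∧ ∀ i < 4, g i = p i ∧ g (4 + i) = p i) ∧
      (∃ q, (q = patA ∨ q = patB) ∧ ∀ i < 4, g (d + i) = q i ∧ g (d + 4 + i) = q i)) ↔
    (d = 4 ∨ 8 ≤ d) := by
  constructor
  · rintro ⟨g, h1, h2, h3, ⟨p, hp, hpe⟩, ⟨q, hq, hqe⟩⟩
    by_contra hcon
    push_neg at hcon
    have hd7 : d ≤ 7 := by omega
    have hdne : d ≠ 4 := hcon.1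
    have e1 := (hpe 0 (by norm_num)).1
    have e2 := (hpe 1 (by norm_num)).1
    have e3 := (hpe 2 (by norm_num)).1
    have e4 := (hpe 3 (by norm_num)).1
    have e5 := (hpe 0 (by norm_num)).2
    have e6 := (hpe 1 (by norm_num)).2
    have e7 := (hpe 2 (by norm_num)).2
    have e8 := (hpe 3 (by norm_num)).2
    have f1 := (hqe 0 (by norm_num)).1
    have f2 := (hqe 1 (by norm_num)).1
    interval_cases d
    · rcases hp with rfl | rfl <;> rcases hq with rfl | rfl <;>
        simp [patA, patB] at e1 e2 e3 e4 e5 e6 e7 e8 f1 f2 <;> omega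
    · rcases hp with rfl | rfl <;> rcases hq with rfl | rfl <;>
        simp [patA, patB] at e1 e2 e3 e4 e5 e6 e7 e8 f1 f2 <;> omega
    · rcases hp with rfl | rfl <;> rcases hq with rfl | rfl <;>
        simp [patA, patB] at e1 e2 e3 e4 e5 e6 e7 e8 f1 f2 <;> omega
    · omega
    · rcases hp with rfl | rfl <;> rcases hq with rfl | rfl <;>
        simp [patA, patB] at e1 e2 e3 e4 e5 e6 e7 e8 f1 f2 <;> omega
    · rcases hp with rfl | rfl <;> rcases hq with rfl | rfl <;>
        simp [patA, patB] at e1 e2 e3 e4 e5 e6 e7 e8 f1 f2 <;> omega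
    · have e9 : g 6 ≠ g 8 := h3 6 (by norm_num)
      rcases hp with rfl | rfl <;> rcases hq with rfl | rfl <;>
        simp [patA, patB] at e1 e2 e3 e4 e5 e6 e7 e8 f1 f2 <;> omega
  · intro h
    rcases h with rfl | h8
    · refine ⟨gA, fun i _ => gA_le i, fun i _ => gA_adj i, fun i _ => gA_ne2 i,
        ⟨patA, Or.inl rfl, fun i hi => ?_⟩, ⟨patA, Or.inl rfl, fun i hi => ?_⟩⟩
      · interval_cases i <;> exact ⟨by decide, by decide⟩
      · interval_cases i <;> exact ⟨by decide, by decide⟩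
    · have h4 : d % 4 = 0 ∨ d % 4 = 1 ∨ d % 4 = 2 ∨ d % 4 = 3 := by omega
      rcases h4 with h | h | h | h
      · refine ⟨gA, fun i _ => gA_le i, fun i _ => gA_adj i, fun i _ => gA_ne2 i,
          ⟨patA, Or.inl rfl, fun i hi => ?_⟩, ⟨patA, Or.inl rfl, fun i hi => ?_⟩⟩
        · interval_cases i <;> exact ⟨by decide, by decide⟩
        · constructor
          · show patA ((d + i) % 4) = patA i
            rw [show (d + i) % 4 = i by omega]
          · show patA ((d + 4 + i) % 4) = patA i
            rw [show (d + 4 + i) % 4 = i by omega]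
      · refine ⟨gOne, fun i _ => gOne_le i, fun i _ => gOne_adj i, fun i _ => gOne_ne2 i,
          ⟨patA, Or.inl rfl, fun i hi => ?_⟩, ⟨patA, Or.inl rfl, fun i hi => ?_⟩⟩
        · interval_cases i <;> exact ⟨by decide, by decide⟩
        · constructor
          · rw [gOne_tail _ (by omega), show (d + i - 9) % 4 = i by omega]
          · rw [gOne_tail _ (by omega), show (d + 4 + i - 9) % 4 = i by omega]
      · refine ⟨gTwo, fun i _ => gTwo_le i, fun i _ => gTwo_adj i, fun i _ => gTwo_ne2 i,
          ⟨patA, Or.inl rfl, fun i hi => ?_⟩, ⟨patB, Or.inr rfl, fun i hi => ?_⟩⟩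
        · interval_cases i <;> exact ⟨by decide, by decide⟩
        · constructor
          · rw [gTwo_tail _ (by omega), show (d + i - 10) % 4 = i by omega]
          · rw [gTwo_tail _ (by omega), show (d + 4 + i - 10) % 4 = i by omega]
      · refine ⟨gThree, fun i _ => gThree_le i, fun i _ => gThree_adj i, fun i _ => gThree_ne2 i,
          ⟨patA, Or.inl rfl, fun i hi => ?_⟩, ⟨patA, Or.inl rfl, fun i hi => ?_⟩⟩
        · interval_cases i <;> exact ⟨by decide, by decide⟩
        · constructor
          · rw [gThree_tail _ (by omega), show (d + i - 11) % 4 = i by omega]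
          · rw [gThree_tail _ (by omega), show (d + 4 + i - 11) % 4 = i by omega]
end

section
/- Let λ be an even natural number, G a graph with λ'(G) ≤ λ, and v a vertex of G with degree exactly λ/2 + 1. Then in any distance edge-labeling of G with maximum label ≤ λ, the edges incident to v receive exactly the labels of the even set E_λ = {l ∈ ℕ : l ≤ λ, l even}, one label each. -/
open SimpleGraph

/-- `lambdaE G = λ'(G)`: the minimum over distance edge-labelings of the maximum label. -/

lemma combinat (lam : ℕ) (hlam : Even lam) (T : Finset ℕ)
    (hsub : ∀ a ∈ T, a ≤ lam)
    (hgap : ∀ a ∈ T, ∀ b ∈ T, a ≠ b → 2 ≤ |(a:ℤ) - b|)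
    (hcard : T.card = lam / 2 + 1) :
    ↑T = {l : ℕ | l ≤ lam ∧ Even l} := by
  have hgap' : ∀ a ∈ T, ∀ b ∈ T, a ≠ b → (a + 2 ≤ b ∨ b + 2 ≤ a) := by
    intro a ha b hb hne
    rcases le_abs.mp (hgap a ha b hb hne) with h | h <;> omega
  have hinj : Set.InjOn (· / 2) ↑T := by
    intro a ha b hb h
    by_contra hne
    rcases hgap' a ha b hb hne with h2 | h2 <;> simp only at h <;> omega
  have hsubr : T.image (· / 2) ⊆ Finset.range (lam / 2 + 1) := by
    intro x hx
    simp only [Finset.mem_image] at hx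
    obtain ⟨a, ha, rfl⟩ := hx
    have := hsub a ha
    simp only [Finset.mem_range]
    omega
  have himg : T.image (· / 2) = Finset.range (lam / 2 + 1) := by
    apply Finset.eq_of_subset_of_card_le hsubr
    rw [Finset.card_image_of_injOn hinj, hcard, Finset.card_range]
  have hsurj : ∀ k ≤ lam / 2, ∃ a ∈ T, a / 2 = k := by
    intro k hk
    have : k ∈ T.image (· / 2) := by
      rw [himg]; simp; omega
    simpa using this
  obtain ⟨m, rfl⟩ := hlam
  have hhalf : m + m = 2 * m := by ring
  have key : ∀ j k, k + j = m → ∀ a ∈ T, a / 2 = k → a = 2 * k := by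
    intro j
    induction j with
    | zero =>
      intro k hk a ha h
      have := hsub a ha
      omega
    | succ j ih =>
      intro k hk a ha h
      obtain ⟨b, hb, hb2⟩ := hsurj (k + 1) (by omega)
      have hbval : b = 2 * (k + 1) := ih (k + 1) (by omega) b hb hb2
      have hne : a ≠ b := by omega
      rcases hgap' a ha b hb hne with h2 | h2 <;> omega
  ext l
  simp only [Finset.coe_sort_coe, Set.mem_setOf_eq, Finset.mem_coe]
  constructor
  · intro hl
    have h1 : l ≤ m + m := hsub l hl
    have h2 : l = 2 * (l / 2) := key (m - l / 2) (l / 2) (by omega) l hl rfl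
    exact ⟨h1, ⟨l / 2, by omega⟩⟩
  · rintro ⟨hle, k, rfl⟩
    obtain ⟨a, ha, ha2⟩ := hsurj k (by omega)
    have h3 : a = 2 * k := key (m - k) k (by omega) a ha ha2
    have h4 : k + k = a := by omega
    rw [h4]; exact ha


theorem stmt13 {V : Type*} [Fintype V] [DecidableEq V] (G : SimpleGraph V)
    [DecidableRel G.Adj] (lam : ℕ) (hlam : Even lam) (f : Sym2 V → ℕ)
    (hf : IsDistEdgeLabeling G f) (hspan : ∀ e ∈ G.edgeSet, f e ≤ lam)
    (v : V) (hdeg : G.degree v = lam / 2 + 1) :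
    f '' {e ∈ G.edgeSet | v ∈ e} = {l : ℕ | l ≤ lam ∧ Even l} ∧
    Set.InjOn f {e ∈ G.edgeSet | v ∈ e} := by
  set S : Set (Sym2 V) := {e ∈ G.edgeSet | v ∈ e} with hSdef
  have hadj : ∀ e ∈ S, ∀ e' ∈ S, e ≠ e' → edgeAdj e e' := by
    intro e he e' he' hne
    exact ⟨hne, v, he.2, he'.2⟩
  have hgapS : ∀ e ∈ S, ∀ e' ∈ S, e ≠ e' → 2 ≤ |(f e : ℤ) - f e'| := by
    intro e he e' he' hne
    exact hf.1 e he.1 e' he'.1 (hadj e he e' he' hne)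
  have hinj : Set.InjOn f S := by
    intro e he e' he' hfe
    by_contra hne
    have := hgapS e he e' he' hne
    rw [hfe] at this
    simp at this
  have hScoe : ↑(G.incidenceFinset v) = S := by
    ext e
    rw [Finset.mem_coe, SimpleGraph.mem_incidenceFinset]
    rfl
  set T : Finset ℕ := (G.incidenceFinset v).image f with hTdef
  have hTcoe : ↑T = f '' S := by
    rw [hTdef, Finset.coe_image, hScoe]
  have hcard : T.card = lam / 2 + 1 := by
    rw [hTdef, Finset.card_image_of_injOn (hScoe ▸ hinj),
      SimpleGraph.card_incidenceFinset_eq_degree, hdeg]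
  have hsub : ∀ a ∈ T, a ≤ lam := by
    intro a ha
    rw [hTdef, Finset.mem_image] at ha
    obtain ⟨e, he, rfl⟩ := ha
    have heS : e ∈ S := hScoe ▸ Finset.mem_coe.mpr he
    exact hspan e heS.1
  have hgap : ∀ a ∈ T, ∀ b ∈ T, a ≠ b → 2 ≤ |(a:ℤ) - b| := by
    intro a ha b hb hne
    rw [hTdef, Finset.mem_image] at ha hb
    obtain ⟨e, he, rfl⟩ := ha
    obtain ⟨e', he', rfl⟩ := hb
    have heS : e ∈ S := hScoe ▸ Finset.mem_coe.mpr he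
    have heS' : e' ∈ S := hScoe ▸ Finset.mem_coe.mpr he'
    exact hgapS e heS e' heS' (fun h => hne (by rw [h]))
  have := combinat lam hlam T hsub hgap hcard
  rw [hTcoe] at this
  exact ⟨this, hinj⟩
end

section
/- Let λ be even, G = (V,E) a graph with λ'(G) ≤ λ, and u, v adjacent vertices with deg(u) = λ/2 + 1 and deg(v) = λ/2. Then in any distance edge-labeling f of G with maximum label ≤ λ, either: (a) f({u,v}) = 0, the other edges incident to u use labels from E_λ \ {0}, and the other edges incident to v use labels from O_λ \ {1}; or (b) f({u,v}) = λ, the other edges incident to u use labels from E_λ \ {λ}, and the other edges incident to v use labels from O_λ \ {λ-1}. -/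
open SimpleGraph

open Finset

lemma distEL_halves_eq (n : ℕ) (S : Finset ℕ) (hcard : S.card = n + 1)
    (hle : ∀ a ∈ S, a ≤ 2 * n)
    (hgap : ∀ a ∈ S, ∀ b ∈ S, a ≠ b → 2 ≤ |(a:ℤ) - (b:ℤ)|) :
    S.image (· / 2) = range (n + 1) := by
  have hinj : Set.InjOn (· / 2) S := by
    intro a ha b hb hab
    by_contra hne
    have h := hgap a ha b hb hne
    rcases abs_cases ((a:ℤ) - (b:ℤ)) with ⟨h1, h2⟩ | ⟨h1, h2⟩ <;> simp only at hab <;> omega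
  apply Finset.eq_of_subset_of_card_le
  · intro k hk
    simp only [mem_image] at hk
    obtain ⟨a, ha, rfl⟩ := hk
    have := hle a ha
    simp only [mem_range]; omega
  · rw [card_range, Finset.card_image_of_injOn hinj, hcard]

lemma distEL_sum_split (n : ℕ) (S : Finset ℕ) (hcard : S.card = n + 1)
    (hle : ∀ a ∈ S, a ≤ 2 * n)
    (hgap : ∀ a ∈ S, ∀ b ∈ S, a ≠ b → 2 ≤ |(a:ℤ) - (b:ℤ)|) :
    ∑ a ∈ S, a = 2 * (∑ k ∈ range (n + 1), k) + ∑ a ∈ S, a % 2 := by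
  have h := distEL_halves_eq n S hcard hle hgap
  have hinj : ∀ a ∈ S, ∀ b ∈ S, a / 2 = b / 2 → a = b := by
    intro a ha b hb hab
    by_contra hne
    have h := hgap a ha b hb hne
    rcases abs_cases ((a:ℤ) - (b:ℤ)) with ⟨h1, h2⟩ | ⟨h1, h2⟩ <;> omega
  have h2 : ∑ k ∈ range (n + 1), k = ∑ a ∈ S, a / 2 := by
    rw [← h, Finset.sum_image hinj]
  rw [h2, Finset.mul_sum, ← Finset.sum_add_distrib]
  exact Finset.sum_congr rfl fun a _ => by omega

lemma distEL_key (n : ℕ) (S : Finset ℕ) (hcard : S.card = n + 1)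
    (hle : ∀ a ∈ S, a ≤ 2 * n)
    (hgap : ∀ a ∈ S, ∀ b ∈ S, a ≠ b → 2 ≤ |(a:ℤ) - (b:ℤ)|) :
    ∀ a, a ∈ S ↔ a ≤ 2 * n ∧ Even a := by
  have hinj' : Set.InjOn (fun a => 2 * n - a) S := by
    intro a ha b hb hab
    have := hle a ha; have := hle b hb
    simp only at hab; omega
  set S' := S.image (fun a => 2 * n - a) with hS'
  have hcard' : S'.card = n + 1 := by rw [hS', Finset.card_image_of_injOn hinj', hcard]
  have hle' : ∀ b ∈ S', b ≤ 2 * n := by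
    intro b hb
    simp only [hS', mem_image] at hb
    obtain ⟨a, ha, rfl⟩ := hb
    omega
  have hgap' : ∀ a ∈ S', ∀ b ∈ S', a ≠ b → 2 ≤ |(a:ℤ) - (b:ℤ)| := by
    intro a ha b hb hne
    simp only [hS', mem_image] at ha hb
    obtain ⟨x, hx, rfl⟩ := ha
    obtain ⟨y, hy, rfl⟩ := hb
    have hxy : x ≠ y := by intro h; exact hne (by rw [h])
    have h := hgap x hx y hy hxy
    have := hle x hx; have := hle y hy
    rcases abs_cases ((x:ℤ) - (y:ℤ)) with ⟨h1, h2⟩ | ⟨h1, h2⟩ <;>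
      rcases abs_cases ((↑(2 * n - x):ℤ) - (↑(2 * n - y):ℤ)) with ⟨g1, g2⟩ | ⟨g1, g2⟩ <;> omega
  have h1 := distEL_sum_split n S hcard hle hgap
  have h2 := distEL_sum_split n S' hcard' hle' hgap'
  have hsum' : ∑ b ∈ S', b + ∑ a ∈ S, a = 2 * n * (n + 1) := by
    rw [hS', Finset.sum_image (fun x hx y hy h => hinj' hx hy h), ← Finset.sum_add_distrib]
    have : ∀ a ∈ S, 2 * n - a + a = 2 * n := fun a ha => by have := hle a ha; omega
    rw [Finset.sum_congr rfl this, Finset.sum_const, hcard, smul_eq_mul]; ring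
  have hmod' : ∑ b ∈ S', b % 2 = ∑ a ∈ S, a % 2 := by
    rw [hS', Finset.sum_image (fun x hx y hy h => hinj' hx hy h)]
    exact Finset.sum_congr rfl fun a ha => by have := hle a ha; omega
  have gauss : (∑ k ∈ range (n + 1), k) * 2 = (n + 1) * n := by
    rw [Finset.sum_range_id_mul_two]; simp
  obtain ⟨Q, hQ⟩ : ∃ q, (n + 1) * n = q := ⟨_, rfl⟩
  obtain ⟨P, hP⟩ : ∃ p, ∑ k ∈ range (n + 1), k = p := ⟨_, rfl⟩
  rw [hQ, hP] at gauss
  rw [hP] at h1 h2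
  have h2n : 2 * n * (n + 1) = 2 * Q := by rw [← hQ]; ring
  rw [h2n] at hsum'
  have hzero : ∑ a ∈ S, a % 2 = 0 := by omega
  have heven : ∀ a ∈ S, a % 2 = 0 := fun a ha => (Finset.sum_eq_zero_iff.mp hzero) a ha
  intro a
  constructor
  · intro ha
    exact ⟨hle a ha, Nat.even_iff.mpr (heven a ha)⟩
  · rintro ⟨h1a, h2a⟩
    have hmem : a / 2 ∈ range (n + 1) := by simp only [mem_range]; omega
    rw [← distEL_halves_eq n S hcard hle hgap] at hmem
    simp only [mem_image] at hmem
    obtain ⟨b, hb, hba⟩ := hmem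
    have hb2 := heven b hb
    have ha2 := Nat.even_iff.mp h2a
    have : b = a := by omega
    rwa [this] at hb

theorem stmt15 {V : Type*} [Fintype V] [DecidableEq V] (G : SimpleGraph V)
    [DecidableRel G.Adj] (lam : ℕ) (hlam : Even lam) (f : Sym2 V → ℕ)
    (hf : IsDistEdgeLabeling G f) (hspan : ∀ e ∈ G.edgeSet, f e ≤ lam)
    (u v : V) (huv : G.Adj u v)
    (hdu : G.degree u = lam / 2 + 1) (hdv : G.degree v = lam / 2) :
    (f s(u, v) = 0 ∧
      (∀ e ∈ G.edgeSet, u ∈ e → e ≠ s(u, v) →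
        f e ∈ {l : ℕ | l ≤ lam ∧ Even l} \ {0}) ∧
      (∀ e ∈ G.edgeSet, v ∈ e → e ≠ s(u, v) →
        f e ∈ {l : ℕ | l ≤ lam ∧ Odd l} \ {1})) ∨
    (f s(u, v) = lam ∧
      (∀ e ∈ G.edgeSet, u ∈ e → e ≠ s(u, v) →
        f e ∈ {l : ℕ | l ≤ lam ∧ Even l} \ {lam}) ∧
      (∀ e ∈ G.edgeSet, v ∈ e → e ≠ s(u, v) →
        f e ∈ {l : ℕ | l ≤ lam ∧ Odd l} \ {lam - 1})) := by
  classical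
  obtain ⟨m, hm⟩ := hlam
  set n := lam / 2 with hn
  have hlam2 : lam = 2 * n := by omega
  have hne : u ≠ v := huv.ne
  have heuv : s(u, v) ∈ G.edgeSet := huv
  have huuv : u ∈ s(u, v) := Sym2.mem_mk_left u v
  have hvuv : v ∈ s(u, v) := Sym2.mem_mk_right u v
  have hadj2 : ∀ e ∈ G.edgeSet, ∀ e' ∈ G.edgeSet, e ≠ e' → ∀ w, w ∈ e → w ∈ e' →
      2 ≤ |(f e : ℤ) - (f e' : ℤ)| :=
    fun e he e' he' hne' w hw hw' => hf.1 e he e' he' ⟨hne', w, hw, hw'⟩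
  have honly : ∀ e : Sym2 V, u ∈ e → v ∈ e → e = s(u, v) :=
    fun e hu hv => (Sym2.mem_and_mem_iff hne).mp ⟨hu, hv⟩
  -- the incidence finset at u
  set U := G.incidenceFinset u with hU
  have hmemU : ∀ e, e ∈ U ↔ e ∈ G.edgeSet ∧ u ∈ e := by
    intro e
    rw [hU, SimpleGraph.mem_incidenceFinset]
    exact Iff.rfl
  have hUcard : U.card = n + 1 := by
    rw [hU, SimpleGraph.card_incidenceFinset_eq_degree, hdu]
  have hUinj : Set.InjOn f U := by
    intro e he e' he' hfe
    by_contra hnee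
    have h := hadj2 e ((hmemU e).mp he).1 e' ((hmemU e').mp he').1 hnee u
      ((hmemU e).mp he).2 ((hmemU e').mp he').2
    rw [hfe] at h
    simp at h
  set S := U.image f with hS
  have hScard : S.card = n + 1 := by rw [hS, Finset.card_image_of_injOn hUinj, hUcard]
  have hSle : ∀ a ∈ S, a ≤ 2 * n := by
    intro a ha
    simp only [hS, mem_image] at ha
    obtain ⟨e, he, rfl⟩ := ha
    rw [← hlam2]
    exact hspan e ((hmemU e).mp he).1
  have hSgap : ∀ a ∈ S, ∀ b ∈ S, a ≠ b → 2 ≤ |(a:ℤ) - (b:ℤ)| := by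
    intro a ha b hb hab
    simp only [hS, mem_image] at ha hb
    obtain ⟨e, he, rfl⟩ := ha
    obtain ⟨e', he', rfl⟩ := hb
    exact hadj2 e ((hmemU e).mp he).1 e' ((hmemU e').mp he').1 (fun h => hab (by rw [h]))
      u ((hmemU e).mp he).2 ((hmemU e').mp he').2
  have hkey := distEL_key n S hScard hSle hSgap
  -- every even label ≤ lam is attained at u
  have hattain : ∀ a, a ≤ lam → Even a → ∃ e, (e ∈ G.edgeSet ∧ u ∈ e) ∧ f e = a := by
    intro a h1 h2
    have : a ∈ S := (hkey a).mpr ⟨by omega, h2⟩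
    simp only [hS, mem_image] at this
    obtain ⟨e, he, hfe⟩ := this
    exact ⟨e, (hmemU e).mp he, hfe⟩
  -- labels of u-edges are even and ≤ lam
  have hueven : ∀ e ∈ G.edgeSet, u ∈ e → f e ≤ lam ∧ Even (f e) := by
    intro e he hu
    have : f e ∈ S := by
      simp only [hS, mem_image]
      exact ⟨e, (hmemU e).mpr ⟨he, hu⟩, rfl⟩
    have := (hkey (f e)).mp this
    exact ⟨by omega, this.2⟩
  -- v-edges (other than uv) have label different from every u-edge label
  have hvne : ∀ e, e ∈ G.edgeSet → v ∈ e → e ≠ s(u, v) →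
      ∀ e', e' ∈ G.edgeSet → u ∈ e' → f e ≠ f e' := by
    intro e he hv hnuv e' he' hu' hfeq
    have hee' : e ≠ e' := by
      intro h
      exact hnuv (honly e (h ▸ hu') hv)
    by_cases hsh : ∃ w, w ∈ e ∧ w ∈ e'
    · obtain ⟨w, hw, hw'⟩ := hsh
      have := hadj2 e he e' he' hee' w hw hw'
      rw [hfeq] at this
      simp at this
    · have he'nuv : e' ≠ s(u, v) := by
        intro h
        exact hsh ⟨v, hv, h ▸ hvuv⟩
      have hd2 : edgeDist2 G e e' := by
        refine ⟨fun h => hsh h.2, hee', s(u, v), heuv, ⟨hnuv, v, hv, hvuv⟩,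
          ⟨fun h => he'nuv h.symm, u, huuv, hu'⟩⟩
      have := hf.2 e he e' he' hd2
      rw [hfeq] at this
      simp at this
  -- v-edges other than uv are odd
  have hvodd : ∀ e, e ∈ G.edgeSet → v ∈ e → e ≠ s(u, v) → f e ≤ lam ∧ Odd (f e) := by
    intro e he hv hnuv
    refine ⟨hspan e he, ?_⟩
    rw [Nat.odd_iff]
    by_contra hodd
    have heven : Even (f e) := Nat.even_iff.mpr (by omega)
    obtain ⟨e', he', hfe'⟩ := hattain (f e) (hspan e he) heven
    exact hvne e he hv hnuv e' he'.1 he'.2 hfe'.symm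
  -- f(uv) is even and ≤ lam
  obtain ⟨hcle, hceven⟩ := hueven (s(u, v)) heuv huuv
  set c := f s(u, v) with hc
  -- n ≥ 1
  have hn1 : 1 ≤ n := by
    have : 0 < G.degree v := (SimpleGraph.degree_pos_iff_exists_adj (G := G) v).mpr ⟨u, huv.symm⟩
    omega
  -- the v-incidence edges other than uv
  set W := (G.incidenceFinset v).erase (s(u, v)) with hW
  have hmemW : ∀ e, e ∈ W ↔ (e ∈ G.edgeSet ∧ v ∈ e) ∧ e ≠ s(u, v) := by
    intro e
    rw [hW, Finset.mem_erase, SimpleGraph.mem_incidenceFinset]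
    exact ⟨fun ⟨h1, h2⟩ => ⟨h2, h1⟩, fun ⟨h1, h2⟩ => ⟨h2, h1⟩⟩
  have hWcard : W.card = n - 1 := by
    rw [hW, Finset.card_erase_of_mem, SimpleGraph.card_incidenceFinset_eq_degree, hdv]
    rw [SimpleGraph.mem_incidenceFinset]
    exact ⟨heuv, hvuv⟩
  have hWinj : Set.InjOn f W := by
    intro e he e' he' hfe
    by_contra hnee
    have h1 := (hmemW e).mp he
    have h2 := (hmemW e').mp he'
    have h := hadj2 e h1.1.1 e' h2.1.1 hnee v h1.1.2 h2.1.2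
    rw [hfe] at h
    simp at h
  -- labels at v-edges differ from c by ≥ 2
  have hWc : ∀ e ∈ W, 2 ≤ |(f e : ℤ) - (c : ℤ)| := by
    intro e he
    have h1 := (hmemW e).mp he
    exact hadj2 e h1.1.1 (s(u, v)) heuv h1.2 v h1.1.2 hvuv
  -- main dichotomy
  have hdich : c = 0 ∨ c = lam := by
    by_contra hcon
    push_neg at hcon
    obtain ⟨hc0, hclam⟩ := hcon
    have hc2 : 2 ≤ c ∧ c ≤ 2 * n - 2 := by
      have := Nat.even_iff.mp hceven
      omega
    -- build a too-large subset of range (2n+1)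
    set T : Finset ℕ := S ∪ (W.image f ∪ {c - 1, c + 1}) with hT
    have hTsub : T ⊆ range (2 * n + 1) := by
      intro a ha
      simp only [hT, Finset.mem_union, Finset.mem_insert, Finset.mem_singleton,
        mem_image, mem_range] at ha ⊢
      rcases ha with h | h | h
      · have := hSle a h; omega
      · obtain ⟨e, he, rfl⟩ := h
        have := hspan e ((hmemW e).mp he).1.1
        omega
      · omega
    have hWodd : ∀ a ∈ W.image f, a % 2 = 1 := by
      intro a ha
      simp only [mem_image] at ha
      obtain ⟨e, he, rfl⟩ := ha
      have h1 := (hmemW e).mp he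
      exact Nat.odd_iff.mp (hvodd e h1.1.1 h1.1.2 h1.2).2
    have hd1 : Disjoint S (W.image f ∪ {c - 1, c + 1}) := by
      rw [Finset.disjoint_left]
      intro a ha hb
      have haev := Nat.even_iff.mp ((hkey a).mp ha).2
      simp only [Finset.mem_union, Finset.mem_insert, Finset.mem_singleton] at hb
      have := Nat.even_iff.mp hceven
      rcases hb with h | h | h
      · have := hWodd a h; omega
      · omega
      · omega
    have hd2 : Disjoint (W.image f) ({c - 1, c + 1} : Finset ℕ) := by
      rw [Finset.disjoint_left]
      intro a ha hb
      simp only [mem_image] at ha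
      obtain ⟨e, he, rfl⟩ := ha
      have h := hWc e he
      simp only [Finset.mem_insert, Finset.mem_singleton] at hb
      rcases abs_cases ((f e : ℤ) - (c : ℤ)) with ⟨h1, _⟩ | ⟨h1, _⟩ <;> rcases hb with h3 | h3 <;> omega
    have hTcard : T.card = 2 * n + 2 := by
      rw [hT, Finset.card_union_of_disjoint hd1, Finset.card_union_of_disjoint hd2,
        hScard, Finset.card_image_of_injOn hWinj, hWcard]
      have : ({c - 1, c + 1} : Finset ℕ).card = 2 := by
        rw [Finset.card_insert_of_notMem (by simp only [Finset.mem_singleton]; omega), Finset.card_singleton]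
      rw [this]
      omega
    have := Finset.card_le_card hTsub
    rw [hTcard, card_range] at this
    omega
  -- finish
  rcases hdich with h0 | hl
  · left
    refine ⟨h0, ?_, ?_⟩
    · intro e he hu hnuv
      obtain ⟨h1, h2⟩ := hueven e he hu
      have hd := hadj2 e he (s(u, v)) heuv hnuv u hu huuv
      rw [← hc, h0] at hd
      simp only [Set.mem_diff, Set.mem_setOf_eq, Set.mem_singleton_iff]
      refine ⟨⟨h1, h2⟩, ?_⟩
      rcases abs_cases ((f e : ℤ) - (0 : ℕ)) with ⟨g1, _⟩ | ⟨g1, _⟩ <;> omega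
    · intro e he hv hnuv
      obtain ⟨h1, h2⟩ := hvodd e he hv hnuv
      have hd := hadj2 e he (s(u, v)) heuv hnuv v hv hvuv
      rw [← hc, h0] at hd
      simp only [Set.mem_diff, Set.mem_setOf_eq, Set.mem_singleton_iff]
      refine ⟨⟨h1, h2⟩, ?_⟩
      rcases abs_cases ((f e : ℤ) - (0 : ℕ)) with ⟨g1, _⟩ | ⟨g1, _⟩ <;> omega
  · right
    refine ⟨hl, ?_, ?_⟩
    · intro e he hu hnuv
      obtain ⟨h1, h2⟩ := hueven e he hu
      have hd := hadj2 e he (s(u, v)) heuv hnuv u hu huuv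
      rw [← hc, hl] at hd
      simp only [Set.mem_diff, Set.mem_setOf_eq, Set.mem_singleton_iff]
      refine ⟨⟨h1, h2⟩, ?_⟩
      rcases abs_cases ((f e : ℤ) - (lam : ℕ)) with ⟨g1, _⟩ | ⟨g1, _⟩ <;> omega
    · intro e he hv hnuv
      obtain ⟨h1, h2⟩ := hvodd e he hv hnuv
      have hd := hadj2 e he (s(u, v)) heuv hnuv v hv hvuv
      rw [← hc, hl] at hd
      simp only [Set.mem_diff, Set.mem_setOf_eq, Set.mem_singleton_iff]
      refine ⟨⟨h1, h2⟩, ?_⟩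
      rcases abs_cases ((f e : ℤ) - (lam : ℕ)) with ⟨g1, _⟩ | ⟨g1, _⟩ <;> omega
end

section
/- Let λ ∈ ℕ be odd, λ ≥ 9, and let k = (λ+1)/2. Consider the bipartite 'incompatibility' graph H_A on vertex set (O_λ \ {1}) ⊔ (E_λ \ {0}) (each side has k-1 elements), where an odd label a and an even label b are joined by an edge iff |a - b| ≤ 1 (i.e., the corresponding edge labels cannot appear on incident edges). Adding the single extra edge {2, λ} makes H_A 2-regular, and the bipartite complement of H_A (within the complete bipartite graph between the two sides) is (k-3)-regular and therefore has a perfect matching. -/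
theorem stmt17 (lam : ℕ) (hodd : Odd lam) (hlam : 9 ≤ lam) (k : ℕ)
    (hk : k = (lam + 1) / 2) :
    let X : Set ℕ := {a | a ≤ lam ∧ Odd a ∧ a ≠ 1}
    let Y : Set ℕ := {b | b ≤ lam ∧ Even b ∧ b ≠ 0}
    -- incompatibility graph `H_A`, with the extra edge {2, lam} added
    let E' : ℕ → ℕ → Prop := fun a b => (a ≤ b + 1 ∧ b ≤ a + 1) ∨ (a = lam ∧ b = 2)
    X.ncard = k - 1 ∧ Y.ncard = k - 1 ∧
    (∀ a ∈ X, {b ∈ Y | E' a b}.ncard = 2) ∧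
    (∀ b ∈ Y, {a ∈ X | E' a b}.ncard = 2) ∧
    (∀ a ∈ X, {b ∈ Y | ¬ E' a b}.ncard = k - 3) ∧
    (∀ b ∈ Y, {a ∈ X | ¬ E' a b}.ncard = k - 3) ∧
    (∃ M : ℕ → ℕ, Set.BijOn M X Y ∧ ∀ a ∈ X, ¬ E' a (M a)) := by
  intro X Y E'
  rw [Nat.odd_iff] at hodd
  have hX : ∀ a, a ∈ X ↔ (a ≤ lam ∧ a % 2 = 1 ∧ a ≠ 1) := by
    intro a; simp only [X, Set.mem_setOf_eq, Nat.odd_iff]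
  have hY : ∀ b, b ∈ Y ↔ (b ≤ lam ∧ b % 2 = 0 ∧ b ≠ 0) := by
    intro b; simp only [Y, Set.mem_setOf_eq, Nat.even_iff]
  have hE : ∀ a b, E' a b ↔ ((a ≤ b + 1 ∧ b ≤ a + 1) ∨ (a = lam ∧ b = 2)) := by
    intro a b; simp only [E']
  have hk5 : 5 ≤ k := by omega
  have hXfin : X.Finite := Set.Finite.subset (Set.finite_Iic lam) fun a ha => ha.1
  have hYfin : Y.Finite := Set.Finite.subset (Set.finite_Iic lam) fun b hb => hb.1
  have hXcard : X.ncard = k - 1 := by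
    have hXeq : X = ↑((Finset.range (k-1)).image fun i => 2*i+3) := by
      ext a
      simp only [hX, Finset.coe_image, Set.mem_image, Finset.mem_coe, Finset.mem_range]
      constructor
      · rintro ⟨h1, h2, h3⟩; exact ⟨(a-3)/2, by omega, by omega⟩
      · rintro ⟨i, hi, rfl⟩; omega
    rw [hXeq, Set.ncard_coe_finset,
      Finset.card_image_of_injective _ (fun x y h => by omega), Finset.card_range]
  have hYcard : Y.ncard = k - 1 := by
    have hYeq : Y = ↑((Finset.range (k-1)).image fun i => 2*i+2) := by
      ext b
      simp only [hY, Finset.coe_image, Set.mem_image, Finset.mem_coe, Finset.mem_range]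
      constructor
      · rintro ⟨h1, h2, h3⟩; exact ⟨(b-2)/2, by omega, by omega⟩
      · rintro ⟨i, hi, rfl⟩; omega
    rw [hYeq, Set.ncard_coe_finset,
      Finset.card_image_of_injective _ (fun x y h => by omega), Finset.card_range]
  have hdegX : ∀ a ∈ X, {b ∈ Y | E' a b}.ncard = 2 := by
    intro a ha
    rw [hX] at ha
    by_cases h : a = lam
    · have : {b ∈ Y | E' a b} = {lam - 1, 2} := by
        ext b
        simp only [Set.mem_setOf_eq, hY, hE, Set.mem_insert_iff, Set.mem_singleton_iff]
        omega
      rw [this, Set.ncard_pair (by omega)]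
    · have : {b ∈ Y | E' a b} = {a - 1, a + 1} := by
        ext b
        simp only [Set.mem_setOf_eq, hY, hE, Set.mem_insert_iff, Set.mem_singleton_iff]
        omega
      rw [this, Set.ncard_pair (by omega)]
  have hdegY : ∀ b ∈ Y, {a ∈ X | E' a b}.ncard = 2 := by
    intro b hb
    rw [hY] at hb
    by_cases h : b = 2
    · have : {a ∈ X | E' a b} = {3, lam} := by
        ext a
        simp only [Set.mem_setOf_eq, hX, hE, Set.mem_insert_iff, Set.mem_singleton_iff]
        omega
      rw [this, Set.ncard_pair (by omega)]
    · have : {a ∈ X | E' a b} = {b - 1, b + 1} := by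
        ext a
        simp only [Set.mem_setOf_eq, hX, hE, Set.mem_insert_iff, Set.mem_singleton_iff]
        omega
      rw [this, Set.ncard_pair (by omega)]
  have hcodegX : ∀ a ∈ X, {b ∈ Y | ¬ E' a b}.ncard = k - 3 := by
    intro a ha
    have hsub : {b ∈ Y | E' a b} ⊆ Y := fun b hb => hb.1
    have : {b ∈ Y | ¬ E' a b} = Y \ {b ∈ Y | E' a b} := by
      ext b; simp only [Set.mem_setOf_eq, Set.mem_diff]; tauto
    rw [this, Set.ncard_diff hsub (hYfin.subset hsub), hYcard, hdegX a ha]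
    omega
  have hcodegY : ∀ b ∈ Y, {a ∈ X | ¬ E' a b}.ncard = k - 3 := by
    intro b hb
    have hsub : {a ∈ X | E' a b} ⊆ X := fun a ha => ha.1
    have : {a ∈ X | ¬ E' a b} = X \ {a ∈ X | E' a b} := by
      ext a; simp only [Set.mem_setOf_eq, Set.mem_diff]; tauto
    rw [this, Set.ncard_diff hsub (hXfin.subset hsub), hXcard, hdegY b hb]
    omega
  refine ⟨hXcard, hYcard, hdegX, hdegY, hcodegX, hcodegY, ?_⟩
  refine ⟨fun a => if a = lam then 4 else if a = lam - 2 then 2 else a + 3, ⟨?_, ?_, ?_⟩, ?_⟩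
  · intro a ha
    rw [hX] at ha
    rw [hY]
    beta_reduce
    split_ifs <;> omega
  · intro a ha a' ha' hMa
    rw [hX] at ha; rw [hX] at ha'
    beta_reduce at hMa
    split_ifs at hMa <;> omega
  · intro b hb
    rw [hY] at hb
    by_cases h2 : b = 2
    · refine ⟨lam - 2, ?_, ?_⟩
      · rw [hX]; omega
      · beta_reduce
        split_ifs <;> omega
    · by_cases h4 : b = 4
      · refine ⟨lam, ?_, ?_⟩
        · rw [hX]; omega
        · beta_reduce
          split_ifs <;> omega
      · refine ⟨b - 3, ?_, ?_⟩
        · rw [hX]; omega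
        · beta_reduce
          split_ifs <;> omega
  · intro a ha
    rw [hX] at ha
    rw [hE]
    beta_reduce
    split_ifs <;> omega
end

section
/- For the path Pₙ on n vertices with n ≥ 6, λ'(Pₙ) = 4; i.e., Pₙ admits a distance edge-labeling with labels in {0,...,4} but none with labels in {0,...,3}. -/
open SimpleGraph

/-! ### Auxiliary lemmas -/

lemma path_mem (n i : ℕ) (h : i + 1 < n) :
    s((⟨i, by omega⟩ : Fin n), ⟨i+1, h⟩) ∈ (SimpleGraph.pathGraph n).edgeSet := by
  rw [SimpleGraph.mem_edgeSet, SimpleGraph.pathGraph_adj]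
  left; rfl

lemma path_eadj (n i : ℕ) (h : i + 2 < n) :
    edgeAdj (s((⟨i, by omega⟩ : Fin n), ⟨i+1, by omega⟩))
      s((⟨i+1, by omega⟩ : Fin n), ⟨i+2, h⟩) := by
  constructor
  · simp only [ne_eq, Sym2.eq_iff, Fin.mk.injEq]
    omega
  · exact ⟨⟨i+1, by omega⟩, by simp [Sym2.mem_iff], by simp [Sym2.mem_iff]⟩

lemma path_edist2 (n i : ℕ) (h : i + 3 < n) :
    edgeDist2 (SimpleGraph.pathGraph n) (s((⟨i, by omega⟩ : Fin n), ⟨i+1, by omega⟩))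
      s((⟨i+2, by omega⟩ : Fin n), ⟨i+3, h⟩) := by
  refine ⟨?_, ?_, s((⟨i+1, by omega⟩ : Fin n), ⟨i+2, by omega⟩), path_mem n (i+1) (by omega),
      path_eadj n i (by omega), path_eadj n (i+1) (by omega)⟩
  · rintro ⟨-, y, hy, hy'⟩
    simp only [Sym2.mem_iff] at hy hy'
    rcases hy with rfl | rfl <;> rcases hy' with h' | h' <;>
      simp only [Fin.mk.injEq] at h' <;> omega
  · simp only [ne_eq, Sym2.eq_iff, Fin.mk.injEq]
    omega

theorem stmt19 (n : ℕ) (hn : 6 ≤ n) : lambdaE (SimpleGraph.pathGraph n) = 4 := by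
  have h4 : (4 : ℕ) ∈ {l | ∃ f : Sym2 (Fin n) → ℕ, IsDistEdgeLabeling (SimpleGraph.pathGraph n) f ∧
      ∀ e ∈ (SimpleGraph.pathGraph n).edgeSet, f e ≤ l} := by
    refine ⟨Sym2.lift ⟨fun a b => 2 * (min a.val b.val % 3), fun a b => by simp only; rw [min_comm]⟩,
      ⟨?_, ?_⟩, ?_⟩
    · intro e
      induction e using Sym2.ind with
      | _ u v =>
        intro he e'
        induction e' using Sym2.ind with
        | _ u' v' =>
          intro he' ⟨hne, y, hy, hy'⟩
          rw [SimpleGraph.mem_edgeSet, SimpleGraph.pathGraph_adj] at he he'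
          simp only [ne_eq, Sym2.eq_iff, Fin.ext_iff] at hne
          simp only [Sym2.mem_iff, Fin.ext_iff] at hy hy'
          simp only [Sym2.lift_mk]
          rw [le_abs]
          omega
    · intro e
      induction e using Sym2.ind with
      | _ u v =>
        intro he e'
        induction e' using Sym2.ind with
        | _ u' v' =>
          intro he' ⟨hnadj, hne, g, hg, ⟨hne1, y, hy, hy'⟩, ⟨hne2, z, hz, hz'⟩⟩
          induction g using Sym2.ind with
          | _ w x =>
            rw [SimpleGraph.mem_edgeSet, SimpleGraph.pathGraph_adj] at he he' hg
            have hu : ¬(u ∈ s(u, v) ∧ u ∈ s(u', v')) := fun hc => hnadj ⟨hne, u, hc.1, hc.2⟩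
            have hv : ¬(v ∈ s(u, v) ∧ v ∈ s(u', v')) := fun hc => hnadj ⟨hne, v, hc.1, hc.2⟩
            simp only [Sym2.mem_iff, Fin.ext_iff, not_and, not_or, true_or, or_true,
              forall_const] at hy hy' hz hz' hu hv
            simp only [Sym2.lift_mk]
            rw [le_abs]
            omega
    · intro e
      induction e using Sym2.ind with
      | _ u v =>
        intro he
        rw [SimpleGraph.mem_edgeSet, SimpleGraph.pathGraph_adj] at he
        simp only [Sym2.lift_mk]
        omega
  have hlb : ∀ l ∈ {l | ∃ f : Sym2 (Fin n) → ℕ,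
      IsDistEdgeLabeling (SimpleGraph.pathGraph n) f ∧
      ∀ e ∈ (SimpleGraph.pathGraph n).edgeSet, f e ≤ l}, 4 ≤ l := by
    rintro l ⟨f, ⟨hadj, hd2⟩, hb⟩
    have m0 := path_mem n 0 (by omega)
    have m1 := path_mem n 1 (by omega)
    have m2 := path_mem n 2 (by omega)
    have m3 := path_mem n 3 (by omega)
    have m4 := path_mem n 4 (by omega)
    have h01 := hadj _ m0 _ m1 (path_eadj n 0 (by omega))
    have h12 := hadj _ m1 _ m2 (path_eadj n 1 (by omega))
    have h23 := hadj _ m2 _ m3 (path_eadj n 2 (by omega))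
    have h34 := hadj _ m3 _ m4 (path_eadj n 3 (by omega))
    have h02 := hd2 _ m0 _ m2 (path_edist2 n 0 (by omega))
    have h13 := hd2 _ m1 _ m3 (path_edist2 n 1 (by omega))
    have h24 := hd2 _ m2 _ m4 (path_edist2 n 2 (by omega))
    have b0 := hb _ m0
    have b1 := hb _ m1
    have b2 := hb _ m2
    have b3 := hb _ m3
    have b4 := hb _ m4
    rw [le_abs] at h01 h12 h23 h34 h02 h13 h24
    omega
  unfold lambdaE
  exact le_antisymm (Nat.sInf_le h4) (le_csInf ⟨4, h4⟩ hlb)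
end
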